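/- arXiv:2507.01732 — 5 statements merged into one kernel-verified Lean document; each statement's English description precedes it below -/
import Mathlib

section
/- Let Σ_A be an m×m symmetric positive semidefinite matrix and s ∈ ℝ^m a nonnegative vector. The 2m×2m block matrix [[Σ_A, Σ_A − diag(s)], [Σ_A − diag(s), Σ_A]] is positive semidefinite if and only if the matrix 2Σ_A − diag(s) is positive semidefinite (together with diag(s) ⪰ 0). -/
open Matrix
open scoped ComplexOrder

/-!
Conjugating by the invertible matrix `P = [[1, 1], [1, -1]]`, i.e. passing to the coordinates
`(u + v, u - v)`, turns `2 • [[A, B], [B, A]]` into the block-diagonal matrix with blocks `A + B`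
and `A - B`. With `A = Σ_A` and `B = Σ_A - diag s` these blocks are `2 Σ_A - diag s` and `diag s`.
-/

namespace Matrix

variable {n o 𝕜 : Type*} [Fintype n] [Fintype o] [RCLike 𝕜]

theorem posSemidef_fromBlocks_zero_iff {A : Matrix n n 𝕜} {D : Matrix o o 𝕜} :
    (fromBlocks A 0 0 D).PosSemidef ↔ A.PosSemidef ∧ D.PosSemidef := by
  refine ⟨fun h ↦ ⟨h.submatrix Sum.inl, h.submatrix Sum.inr⟩, fun ⟨hA, hD⟩ ↦ ?_⟩
  refine .of_dotProduct_mulVec_nonneg (hA.1.fromBlocks (by simp) hD.1) fun x ↦ ?_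
  obtain ⟨u, v, rfl⟩ : ∃ u v, x = Sum.elim u v := ⟨_, _, (Sum.elim_comp_inl_inr x).symm⟩
  simpa [fromBlocks_mulVec, Function.star_sumElim, sumElim_dotProduct_sumElim] using
    add_nonneg (hA.dotProduct_mulVec_nonneg u) (hD.dotProduct_mulVec_nonneg v)

variable [DecidableEq n]

theorem isUnit_fromBlocks_one_one_one_neg_one :
    IsUnit (fromBlocks 1 1 1 (-1) : Matrix (n ⊕ n) (n ⊕ n) 𝕜) :=
  .of_mul_eq_one ((2⁻¹ : 𝕜) • fromBlocks 1 1 1 (-1)) <| by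
    rw [mul_smul_comm, fromBlocks_multiply]
    simp [← two_smul 𝕜 (1 : Matrix n n 𝕜), fromBlocks_smul, smul_smul]

theorem two_smul_fromBlocks_self_eq (A B : Matrix n n 𝕜) :
    (2 : 𝕜) • fromBlocks A B B A =
      fromBlocks 1 1 1 (-1) * fromBlocks (A + B) 0 0 (A - B) * (fromBlocks 1 1 1 (-1))ᴴ := by
  simp only [fromBlocks_conjTranspose, conjTranspose_one, conjTranspose_neg, fromBlocks_multiply,
    fromBlocks_smul]
  congr 1 <;> simp [two_smul] <;> abel

theorem posSemidef_fromBlocks_self_iff {A B : Matrix n n 𝕜} :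
    (fromBlocks A B B A).PosSemidef ↔ (A + B).PosSemidef ∧ (A - B).PosSemidef := by
  rw [← posSemidef_fromBlocks_zero_iff,
    ← isUnit_fromBlocks_one_one_one_neg_one.posSemidef_star_right_conjugate_iff
      (x := fromBlocks (A + B) 0 0 (A - B)),
    star_eq_conjTranspose, ← two_smul_fromBlocks_self_eq]
  exact ⟨fun h ↦ h.smul zero_le_two,
    fun h ↦ by simpa using h.smul (inv_nonneg.2 (zero_le_two (α := 𝕜)))⟩

end Matrix

theorem knockoff_block_psd_iff_general {m : ℕ}
    (SA : Matrix (Fin m) (Fin m) ℝ) (s : Fin m → ℝ) :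
    (Matrix.fromBlocks SA (SA - Matrix.diagonal s)
        (SA - Matrix.diagonal s) SA).PosSemidef ↔
      ((Matrix.diagonal s).PosSemidef ∧
        ((2 : ℝ) • SA - Matrix.diagonal s).PosSemidef) := by
  rw [posSemidef_fromBlocks_self_iff, sub_sub_cancel, two_smul, add_sub_assoc, and_comm]

/-- The knockoff covariance block matrix `[[Σ_A, Σ_A − diag s], [Σ_A − diag s, Σ_A]]`
is positive semidefinite iff `diag s ⪰ 0` and `2 Σ_A − diag s ⪰ 0`. -/
theorem knockoff_block_psd_iff {m : ℕ}
    (SA : Matrix (Fin m) (Fin m) ℝ) (s : Fin m → ℝ)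
    (hSA : SA.PosSemidef) (hs : ∀ i, 0 ≤ s i) :
    (Matrix.fromBlocks SA (SA - Matrix.diagonal s)
        (SA - Matrix.diagonal s) SA).PosSemidef ↔
      ((Matrix.diagonal s).PosSemidef ∧
        ((2 : ℝ) • SA - Matrix.diagonal s).PosSemidef) :=
  knockoff_block_psd_iff_general SA s
end

section
/- Let W_1,…,W_m be random variables and suppose the signs ε_j = sign(W_j) for j in a null set H_0 are i.i.d. symmetric ±1 random variables independent of the magnitudes (|W_1|,…,|W_m|) and of (W_j)_{j∉H_0}. For q ∈ (0,1) define the knockoff+ threshold T = min{ t ∈ {|W_j| : W_j ≠ 0} : (1 + #{j : W_j ≤ −t}) / max(1, #{j : W_j ≥ t}) ≤ q } (T = +∞ if no such t). Then E[ #{j ∈ H_0 : W_j ≥ T} / max(1, #{j : W_j ≥ T}) ] ≤ q. -/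
open MeasureTheory ProbabilityTheory Finset

variable {m : ℕ}

/-- Feasible thresholds for the knockoff+ filter at level `q`:
nonzero magnitudes `t = |W_j|` with `(1 + #{j : W_j ≤ -t}) ≤ q · max(1, #{j : W_j ≥ t})`. -/
noncomputable def knockoffPlusFeasible (q : ℝ) (W : Fin m → ℝ) : Finset ℝ :=
  (Finset.univ.image fun j => |W j|).filter fun t =>
    t ≠ 0 ∧
      (1 + ((Finset.univ.filter fun j => W j ≤ -t).card : ℝ)) ≤
        q * max 1 ((Finset.univ.filter fun j => t ≤ W j).card : ℝ)

/-- The knockoff+ selected set `Ŝ = {j : W_j ≥ T_q⁺}`, empty when no threshold is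
feasible (`T_q⁺ = +∞`). -/
noncomputable def knockoffPlusSelected (q : ℝ) (W : Fin m → ℝ) : Finset (Fin m) :=
  if h : (knockoffPlusFeasible q W).Nonempty then
    Finset.univ.filter fun j => (knockoffPlusFeasible q W).min' h ≤ W j
  else ∅

/-!
Flipping the signs of any set of nulls preserves the law of `W`, so it suffices to bound, for a
fixed vector `w`, the average FDP over the `2 ^ #H0` sign patterns of the null coordinates. At
the threshold `T`, feasibility gives `FDP ≤ q · V⁺(T) / (1 + V⁻(T))`, where `V^±(t)` counts the
nulls of magnitude `≥ t` with sign `±`. List the `n` nulls by decreasing magnitude and reveal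
their signs one at a time from the end of the list, keeping track of the number of positive signs
in the unrevealed prefix: then `V⁺ / (1 + V⁻)` over that prefix is a martingale, and the number
of nulls of magnitude `≥ T` is a stopping time, because whether `t` is feasible depends on the
null signs only through `V⁺(t)`. By optional stopping the average at `T` is at most the value
for the whole list, `E[X / (1 + n - X)] = 1 - 2⁻ⁿ` with `X ~ Bin(n, 1/2)`.
-/

namespace KnockoffPlus

def prefixCard (k : ℕ) (τ : Finset ℕ) : ℕ := #{i ∈ τ | i < k}

lemma prefixCard_of_subset_range {n k : ℕ} {τ : Finset ℕ} (h : τ ⊆ range n) (hk : n ≤ k) :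
    prefixCard k τ = #τ := by
  rw [prefixCard, filter_true_of_mem fun i hi => (mem_range.1 (h hi)).trans_le hk]

lemma prefixCard_insert_of_le {n k : ℕ} (τ : Finset ℕ) (hk : k ≤ n) :
    prefixCard k (insert n τ) = prefixCard k τ := by
  rw [prefixCard, filter_insert, if_neg (by omega), prefixCard]

lemma prefixCard_eq_of_le {k k' : ℕ} {τ₁ τ₂ : Finset ℕ} (hk : k ≤ k')
    (hc : prefixCard k τ₁ = prefixCard k τ₂) (hf : {i ∈ τ₁ | k ≤ i} = {i ∈ τ₂ | k ≤ i}) :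
    prefixCard k' τ₁ = prefixCard k' τ₂ := by
  have split (τ : Finset ℕ) :
      prefixCard k' τ = prefixCard k τ + #{i ∈ {i ∈ τ | k ≤ i} | i < k'} := by
    rw [prefixCard, prefixCard, filter_filter, ← card_union_of_disjoint
      (disjoint_filter.2 fun i _ h₁ h₂ => by omega)]
    congr 1
    ext i
    by_cases hi : i ∈ τ <;> simp [hi]; omega
  rw [split τ₁, split τ₂, hc, hf]

/-- With `τ` the set of positions carrying a positive sign, `prefixRatio k τ` is
`V⁺ / (1 + V⁻)` over the first `k` positions. -/
noncomputable def prefixRatio (k : ℕ) (τ : Finset ℕ) : ℝ :=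
  prefixCard k τ / (k + 1 - prefixCard k τ)

lemma prefixRatio_zero (τ : Finset ℕ) : prefixRatio 0 τ = 0 := by
  simp [prefixRatio, prefixCard]

lemma prefixRatio_of_subset_range {n k : ℕ} {τ : Finset ℕ} (h : τ ⊆ range n) (hk : n ≤ k) :
    prefixRatio k τ = #τ / (k + 1 - #τ) := by
  rw [prefixRatio, prefixCard_of_subset_range h hk]

lemma prefixRatio_insert_of_le {n k : ℕ} (τ : Finset ℕ) (hk : k ≤ n) :
    prefixRatio k (insert n τ) = prefixRatio k τ := by
  rw [prefixRatio, prefixRatio, prefixCard_insert_of_le τ hk]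

lemma prefixRatio_succ_sub_of_subset_range {n : ℕ} {τ : Finset ℕ} (h : τ ⊆ range n) :
    prefixRatio (n + 1) τ - prefixRatio n τ = #τ / (n + 2 - #τ) - #τ / (n + 1 - #τ) := by
  rw [prefixRatio_of_subset_range h n.le_succ, prefixRatio_of_subset_range h le_rfl]
  push_cast
  ring_nf

lemma prefixRatio_succ_sub_insert {n : ℕ} {τ : Finset ℕ} (h : τ ⊆ range n) :
    prefixRatio (n + 1) (insert n τ) - prefixRatio n (insert n τ) = 1 / (n + 1 - #τ) := by
  have h' : insert n τ ⊆ range (n + 1) := by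
    rw [range_add_one]
    exact insert_subset_insert n h
  rw [prefixRatio_of_subset_range h' le_rfl, prefixRatio_insert_of_le τ le_rfl,
    prefixRatio_of_subset_range h le_rfl, card_insert_of_notMem fun hn => notMem_range_self (h hn)]
  push_cast
  ring_nf

lemma sum_powersetCard_succ_insert {α M : Type*} [DecidableEq α] [AddCommMonoid M] {a : α}
    {s : Finset α} (ha : a ∉ s) (t : ℕ) (f : Finset α → M) :
    ∑ τ ∈ powersetCard (t + 1) (insert a s), f τ =
      ∑ τ ∈ powersetCard (t + 1) s, f τ + ∑ τ ∈ powersetCard t s, f (insert a τ) := by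
  have hdisj : Disjoint (powersetCard (t + 1) s) ((powersetCard t s).image (insert a)) := by
    refine disjoint_left.2 fun τ hτ hτ' => ?_
    obtain ⟨τ₀, -, rfl⟩ := mem_image.1 hτ'
    exact ha ((mem_powersetCard.1 hτ).1 (mem_insert_self a τ₀))
  have hinj : Set.InjOn (insert a) (powersetCard t s : Set (Finset α)) := fun b hb c hc hbc => by
    rw [← erase_insert fun h => ha ((mem_powersetCard.1 hb).1 h),
      ← erase_insert fun h => ha ((mem_powersetCard.1 hc).1 h), hbc]
  rw [powersetCard_succ_insert ha, sum_union hdisj, sum_image hinj]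

/-- Conditionally on the number of positive signs among the positions `< n + 1`, the ratio is a
martingale when the last of these positions is removed. -/
lemma sum_powersetCard_prefixRatio_succ_sub {n j : ℕ} (hj : j ≤ n) :
    ∑ τ ∈ powersetCard j (range (n + 1)), (prefixRatio (n + 1) τ - prefixRatio n τ) = 0 := by
  obtain rfl | ⟨t, rfl⟩ : j = 0 ∨ ∃ t, j = t + 1 := by cases j <;> simp
  · simp [prefixRatio, prefixCard]
  have without_n : ∀ τ ∈ powersetCard (t + 1) (range n),
      prefixRatio (n + 1) τ - prefixRatio n τ = (t + 1) / (n + 1 - t) - (t + 1) / (n - t) := by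
    intro τ hτ
    rw [prefixRatio_succ_sub_of_subset_range (mem_powersetCard.1 hτ).1, (mem_powersetCard.1 hτ).2]
    push_cast
    ring_nf
  have with_n : ∀ τ ∈ powersetCard t (range n),
      prefixRatio (n + 1) (insert n τ) - prefixRatio n (insert n τ) = 1 / (n + 1 - t) := by
    intro τ hτ
    rw [prefixRatio_succ_sub_insert (mem_powersetCard.1 hτ).1, (mem_powersetCard.1 hτ).2]
  rw [range_add_one, sum_powersetCard_succ_insert notMem_range_self, sum_congr rfl without_n,
    sum_congr rfl with_n, sum_const, sum_const, card_powersetCard, card_powersetCard, card_range,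
    nsmul_eq_mul, nsmul_eq_mul]
  have hchoose : ((n.choose (t + 1) * (t + 1) : ℕ) : ℝ) = (n.choose t * (n - t) : ℕ) :=
    congrArg _ (Nat.choose_succ_right_eq n t)
  push_cast [Nat.cast_sub (by omega : t ≤ n)] at hchoose
  have htn : (t : ℝ) < n := by exact_mod_cast (by omega : t < n)
  field_simp [(by linarith : (n : ℝ) - t ≠ 0), (by linarith : (n : ℝ) + 1 - t ≠ 0)]
  linear_combination -hchoose

lemma prefixRatio_range_succ_sub (n : ℕ) :
    prefixRatio (n + 1) (range (n + 1)) - prefixRatio n (range (n + 1)) = 1 := by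
  rw [prefixRatio_of_subset_range subset_rfl le_rfl, range_add_one,
    prefixRatio_insert_of_le _ le_rfl,
    prefixRatio_of_subset_range subset_rfl le_rfl, ← range_add_one, card_range, card_range]
  push_cast
  field_simp
  ring

/-- `K` is a stopping time for the backward filtration that at time `k` reveals the number of
positive signs among the positions `< k` and the signs at all positions `≥ k`. -/
def IsPrefixStoppingTime (n : ℕ) (K : Finset ℕ → ℕ) : Prop :=
  ∀ ⦃τ₁⦄, τ₁ ⊆ range n → ∀ ⦃τ₂⦄, τ₂ ⊆ range n → ∀ k, prefixCard k τ₁ = prefixCard k τ₂ →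
    {i ∈ τ₁ | k ≤ i} = {i ∈ τ₂ | k ≤ i} → (k ≤ K τ₁ ↔ k ≤ K τ₂)

namespace IsPrefixStoppingTime

variable {n : ℕ} {K : Finset ℕ → ℕ}

lemma min_of_succ (hK : IsPrefixStoppingTime (n + 1) K) :
    IsPrefixStoppingTime n fun τ => min (K τ) n := by
  intro τ₁ h₁ τ₂ h₂ k hc hf
  have hsub : range n ⊆ range (n + 1) := range_subset_range.2 n.le_succ
  by_cases hk : k ≤ n
  · simp only [le_min_iff, hK (h₁.trans hsub) (h₂.trans hsub) k hc hf]
  · simp only [le_min_iff, hk, and_false]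

lemma min_insert_of_succ (hK : IsPrefixStoppingTime (n + 1) K) :
    IsPrefixStoppingTime n fun τ => min (K (insert n τ)) n := by
  intro τ₁ h₁ τ₂ h₂ k hc hf
  have hins {τ : Finset ℕ} (h : τ ⊆ range n) : insert n τ ⊆ range (n + 1) := by
    rw [range_add_one]; exact insert_subset_insert n h
  by_cases hk : k ≤ n
  · have hc' : prefixCard k (insert n τ₁) = prefixCard k (insert n τ₂) := by
      rw [prefixCard_insert_of_le _ hk, prefixCard_insert_of_le _ hk, hc]
    have hf' : {i ∈ insert n τ₁ | k ≤ i} = {i ∈ insert n τ₂ | k ≤ i} := by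
      rw [filter_insert, filter_insert, hf]
    simp only [le_min_iff, hK (hins h₁) (hins h₂) k hc' hf']
  · simp only [le_min_iff, hk, and_false]

lemma le_iff_le_range_card (hK : IsPrefixStoppingTime n K) {τ : Finset ℕ} (hτ : τ ⊆ range n) :
    n ≤ K τ ↔ n ≤ K (range #τ) := by
  have hcard : #τ ≤ n := by simpa using card_le_card hτ
  refine hK hτ (range_subset_range.2 hcard) n ?_ ?_
  · rw [prefixCard_of_subset_range hτ le_rfl, prefixCard_of_subset_range subset_rfl hcard,
      card_range]
  · rw [filter_false_of_mem fun i hi => by simpa using mem_range.1 (hτ hi),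
      filter_false_of_mem fun i hi => by simpa using (mem_range.1 hi).trans_le hcard]

end IsPrefixStoppingTime

lemma sum_ite_le_prefixRatio_succ_sub_le_one {n : ℕ} {K : Finset ℕ → ℕ}
    (hK : IsPrefixStoppingTime (n + 1) K) :
    ∑ τ ∈ (range (n + 1)).powerset,
      (if n + 1 ≤ K τ then prefixRatio (n + 1) τ - prefixRatio n τ else 0) ≤ 1 := by
  have hcard : ∀ j ∈ range (n + 2), ∀ τ ∈ powersetCard j (range (n + 1)),
      (if n + 1 ≤ K τ then prefixRatio (n + 1) τ - prefixRatio n τ else 0) =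
        if n + 1 ≤ K (range j) then prefixRatio (n + 1) τ - prefixRatio n τ else 0 := by
    intro j _ τ hτ
    obtain ⟨hsub, rfl⟩ := mem_powersetCard.1 hτ
    simp only [hK.le_iff_le_range_card hsub]
  rw [sum_powerset, card_range, sum_congr rfl fun j hj => sum_congr rfl (hcard j hj)]
  simp only [← ite_sum_zero]
  rw [sum_range_succ, sum_eq_zero fun j hj => by
    rw [sum_powersetCard_prefixRatio_succ_sub (Nat.lt_succ_iff.1 (mem_range.1 hj)), ite_self]]
  have hfull : powersetCard (n + 1) (range (n + 1)) = {range (n + 1)} := by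
    simpa using powersetCard_self (range (n + 1))
  rw [hfull, sum_singleton, prefixRatio_range_succ_sub]
  split_ifs <;> norm_num

/-- Optional stopping: `E[V⁺/(1 + V⁻)]` at a stopping time is at most its value
`1 - 2⁻ⁿ` at time `n`. -/
theorem sum_prefixRatio_le (n : ℕ) {K : Finset ℕ → ℕ} (hKn : ∀ τ ⊆ range n, K τ ≤ n)
    (hK : IsPrefixStoppingTime n K) :
    ∑ τ ∈ (range n).powerset, prefixRatio (K τ) τ ≤ 2 ^ n - 1 := by
  induction n generalizing K with
  | zero =>
    simp [Nat.le_zero.1 (hKn ∅ (empty_subset _)), prefixRatio_zero]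
  | succ n ih =>
    have hsplit : ∀ τ ∈ (range (n + 1)).powerset, prefixRatio (K τ) τ =
        prefixRatio (min (K τ) n) τ +
          if n + 1 ≤ K τ then prefixRatio (n + 1) τ - prefixRatio n τ else 0 := by
      intro τ hτ
      rcases (hKn τ (mem_powerset.1 hτ)).lt_or_eq with h | h
      · rw [min_eq_left (by omega), if_neg (by omega), add_zero]
      · rw [min_eq_right (by omega), if_pos h.ge, h]
        ring
    have hstopped : ∑ τ ∈ (range (n + 1)).powerset, prefixRatio (min (K τ) n) τ ≤
        (2 ^ n - 1) + (2 ^ n - 1) := by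
      rw [range_add_one, sum_powerset_insert notMem_range_self]
      simp only [prefixRatio_insert_of_le _ (min_le_right _ _)]
      exact add_le_add (ih (fun _ _ => min_le_right _ _) hK.min_of_succ)
        (ih (fun _ _ => min_le_right _ _) hK.min_insert_of_succ)
    rw [sum_congr rfl hsplit, sum_add_distrib]
    linarith [sum_ite_le_prefixRatio_succ_sub_le_one hK, pow_succ (2 : ℝ) n]

section Enumeration

variable {α β : Type*} [DecidableEq α] [LinearOrder β]

lemma exists_injOn_image_range_antitoneOn [Nonempty α] (f : α → β) (s : Finset α) :
    ∃ e : ℕ → α, Set.InjOn e (range #s) ∧ (range #s).image e = s ∧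
      AntitoneOn (f ∘ e) (range #s) := by
  set l := s.toList.mergeSort fun a b => decide (f b ≤ f a)
  have hperm : l.Perm s.toList := List.mergeSort_perm _ _
  have hlen : l.length = #s := by rw [hperm.length_eq, length_toList]
  have hsorted : l.Pairwise fun a b => decide (f b ≤ f a) :=
    List.pairwise_mergeSort
      (fun a b c hab hbc => decide_eq_true ((of_decide_eq_true hbc).trans (of_decide_eq_true hab)))
      (fun a b => by simpa using le_total (f b) (f a)) _
  have hlt {i : ℕ} (hi : i ∈ (range #s : Set ℕ)) : i < l.length := by rw [hlen]; simpa using hi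
  refine ⟨fun i => l.getD i (Classical.arbitrary α), fun i hi j hj h => ?_, ?_,
    fun i hi j hj hij => ?_⟩
  · simp only [List.getD_eq_getElem _ _ (hlt hi), List.getD_eq_getElem _ _ (hlt hj)] at h
    exact ((hperm.nodup_iff.2 (nodup_toList s)).getElem_inj_iff).1 h
  · ext a
    rw [mem_image, ← mem_toList, ← hperm.mem_iff, List.mem_iff_getElem]
    simp only [mem_range, ← hlen]
    exact ⟨fun ⟨i, hi, h⟩ => ⟨i, hi, by rwa [← List.getD_eq_getElem _ (Classical.arbitrary α)]⟩,
      fun ⟨i, hi, h⟩ => ⟨i, hi, by rwa [List.getD_eq_getElem _ _ hi]⟩⟩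
  · simp only [Function.comp_apply, List.getD_eq_getElem _ _ (hlt hi),
      List.getD_eq_getElem _ _ (hlt hj)]
    rcases hij.lt_or_eq with hlt | rfl
    · simpa using List.pairwise_iff_getElem.1 hsorted i j _ _ hlt
    · exact le_rfl

lemma filter_range_eq_range_card_of_antitoneOn {n : ℕ} {g : ℕ → β}
    (hg : AntitoneOn g (range n)) (t : β) :
    {i ∈ range n | t ≤ g i} = range #{i ∈ range n | t ≤ g i} := by
  refine eq_of_subset_of_card_le (fun a ha => mem_range.2 ?_) (card_range _).le
  have hprefix : range (a + 1) ⊆ {i ∈ range n | t ≤ g i} := by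
    intro i hi
    have ha' := mem_filter.1 ha
    have hia : i ≤ a := Nat.lt_succ_iff.1 (mem_range.1 hi)
    have hin : i ∈ range n := mem_range.2 (hia.trans_lt (mem_range.1 ha'.1))
    exact mem_filter.2 ⟨hin, ha'.2.trans (hg (by simpa using hin) (by simpa using ha'.1) hia)⟩
  simpa using card_le_card hprefix

variable {f : α → β} {s : Finset α} {e : ℕ → α}

lemma card_filter_image_eq_prefixCard (hinj : Set.InjOn e (range #s))
    (himage : (range #s).image e = s) (hanti : AntitoneOn (f ∘ e) (range #s))
    {τ : Finset ℕ} (hτ : τ ⊆ range #s) (t : β) :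
    #{j ∈ τ.image e | t ≤ f j} = prefixCard #{j ∈ s | t ≤ f j} τ := by
  have hcount : #{j ∈ s | t ≤ f j} = #{i ∈ range #s | t ≤ f (e i)} := by
    rw [← card_image_of_injOn (hinj.mono (coe_subset.2 (filter_subset _ _))),
      ← filter_image (p := fun j => t ≤ f j), himage]
  have hmem : ∀ i ∈ τ, t ≤ f (e i) ↔ i < #{j ∈ s | t ≤ f j} := fun i hi => by
    rw [hcount, ← mem_range,
      ← filter_range_eq_range_card_of_antitoneOn (g := fun i => f (e i)) hanti, mem_filter]
    simp [hτ hi]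
  rw [filter_image,
    card_image_of_injOn (hinj.mono fun i hi => by simpa using hτ (mem_filter.1 hi).1),
    prefixCard, filter_congr hmem]

end Enumeration

def signFlip {ι : Type*} [DecidableEq ι] (σ : Finset ι) (v : ι → ℝ) : ι → ℝ :=
  fun j => (if j ∈ σ then -1 else 1) * v j

lemma measurable_signFlip {ι : Type*} [DecidableEq ι] (σ : Finset ι) :
    Measurable (signFlip σ : (ι → ℝ) → ι → ℝ) :=
  measurable_pi_lambda _ fun j => measurable_const.mul (measurable_pi_apply j)

def setNullSigns (H0 τ : Finset (Fin m)) (w : Fin m → ℝ) : Fin m → ℝ :=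
  fun j => if j ∈ H0 then (if j ∈ τ then |w j| else -|w j|) else w j

variable {H0 τ : Finset (Fin m)} {w : Fin m → ℝ}

lemma signFlip_eq_setNullSigns {σ : Finset (Fin m)} (hσ : σ ⊆ H0) :
    signFlip σ w = setNullSigns H0 {j ∈ H0 | j ∈ σ ↔ w j < 0} w := by
  funext j
  by_cases hj : j ∈ H0
  · rcases lt_or_ge (w j) 0 with hw | hw
    · by_cases hjσ : j ∈ σ <;> simp [signFlip, setNullSigns, hj, hjσ, hw, abs_of_neg hw]
    · by_cases hjσ : j ∈ σ <;> simp [signFlip, setNullSigns, hj, hjσ, hw.not_gt, abs_of_nonneg hw]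
  · have hjσ : j ∉ σ := fun h => hj (hσ h)
    simp [signFlip, setNullSigns, hj, hjσ]

lemma sum_powerset_signFlip {M : Type*} [AddCommMonoid M] (f : (Fin m → ℝ) → M) :
    ∑ σ ∈ H0.powerset, f (signFlip σ w) = ∑ τ ∈ H0.powerset, f (setNullSigns H0 τ w) := by
  have hinvol : ∀ σ ∈ H0.powerset, {j ∈ H0 | j ∈ {j ∈ H0 | j ∈ σ ↔ w j < 0} ↔ w j < 0} = σ := by
    intro σ hσ
    ext j
    by_cases hj : j ∈ σ
    · by_cases hw : w j < 0 <;> simp [hj, hw, mem_powerset.1 hσ hj]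
    · by_cases hw : w j < 0 <;> simp [hj, hw]
  refine sum_nbij' (fun σ => {j ∈ H0 | j ∈ σ ↔ w j < 0}) (fun τ => {j ∈ H0 | j ∈ τ ↔ w j < 0})
    (fun _ _ => mem_powerset.2 (filter_subset _ _)) (fun _ _ => mem_powerset.2 (filter_subset _ _))
    hinvol hinvol fun σ hσ => by rw [signFlip_eq_setNullSigns (mem_powerset.1 hσ)]

lemma abs_setNullSigns (j : Fin m) : |setNullSigns H0 τ w j| = |w j| := by
  unfold setNullSigns
  split_ifs <;> simp

lemma le_setNullSigns_iff {t : ℝ} (ht : 0 < t) (hτ : τ ⊆ H0) (j : Fin m) :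
    t ≤ setNullSigns H0 τ w j ↔ (j ∈ τ ∧ t ≤ |w j|) ∨ (j ∉ H0 ∧ t ≤ w j) := by
  have := abs_nonneg (w j)
  unfold setNullSigns
  by_cases hj : j ∈ H0
  · by_cases hjτ : j ∈ τ <;> simp [hj, hjτ]
    linarith
  · have hjτ : j ∉ τ := fun h => hj (hτ h)
    simp [hj, hjτ]

lemma setNullSigns_le_neg_iff {t : ℝ} (ht : 0 < t) (hτ : τ ⊆ H0) (j : Fin m) :
    setNullSigns H0 τ w j ≤ -t ↔ (j ∈ H0 \ τ ∧ t ≤ |w j|) ∨ (j ∉ H0 ∧ w j ≤ -t) := by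
  have := abs_nonneg (w j)
  unfold setNullSigns
  by_cases hj : j ∈ H0
  · by_cases hjτ : j ∈ τ <;> simp [hj, hjτ]
    linarith
  · have hjτ : j ∉ τ := fun h => hj (hτ h)
    simp [hj, hjτ]

lemma filter_mem_le_setNullSigns {t : ℝ} (ht : 0 < t) (hτ : τ ⊆ H0) :
    {j ∈ H0 | t ≤ setNullSigns H0 τ w j} = {j ∈ τ | t ≤ |w j|} := by
  ext j
  simp only [mem_filter, le_setNullSigns_iff ht hτ]
  constructor
  · rintro ⟨hj, h | h⟩
    exacts [h, absurd hj h.1]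
  · exact fun h => ⟨hτ h.1, Or.inl h⟩

lemma filter_mem_setNullSigns_le_neg {t : ℝ} (ht : 0 < t) (hτ : τ ⊆ H0) :
    {j ∈ H0 | setNullSigns H0 τ w j ≤ -t} = {j ∈ H0 | t ≤ |w j|} \ {j ∈ τ | t ≤ |w j|} := by
  ext j
  simp only [mem_filter, mem_sdiff, setNullSigns_le_neg_iff ht hτ]
  tauto

lemma card_filter_le_setNullSigns {t : ℝ} (ht : 0 < t) (hτ : τ ⊆ H0) :
    #{j | t ≤ setNullSigns H0 τ w j} = #{j ∈ τ | t ≤ |w j|} + #{j ∈ H0ᶜ | t ≤ w j} := by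
  rw [← card_union_of_disjoint (disjoint_filter_filter
    (disjoint_left.2 fun j hj => by simpa using hτ hj))]
  congr 1
  ext j
  simp [le_setNullSigns_iff ht hτ]

lemma card_filter_setNullSigns_le_neg {t : ℝ} (ht : 0 < t) (hτ : τ ⊆ H0) :
    #{j | setNullSigns H0 τ w j ≤ -t} =
      #{j ∈ H0 | t ≤ |w j|} - #{j ∈ τ | t ≤ |w j|} + #{j ∈ H0ᶜ | w j ≤ -t} := by
  rw [← card_sdiff_of_subset (filter_subset_filter _ hτ),
    ← card_union_of_disjoint (disjoint_left.2 fun j hj hj' =>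
      (mem_compl.1 (mem_filter.1 hj').1) (mem_filter.1 (mem_sdiff.1 hj).1).1)]
  congr 1
  ext j
  by_cases hj : j ∈ τ
  · simp [hj, hτ hj, setNullSigns_le_neg_iff ht hτ]
  · simp [hj, setNullSigns_le_neg_iff ht hτ]

lemma pos_of_mem_knockoffPlusFeasible {q t : ℝ} {v : Fin m → ℝ}
    (ht : t ∈ knockoffPlusFeasible q v) : 0 < t := by
  obtain ⟨hmem, ht0, -⟩ := mem_filter.1 ht
  obtain ⟨i, -, rfl⟩ := mem_image.1 hmem
  exact (abs_nonneg _).lt_of_ne' ht0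

lemma mem_knockoffPlusFeasible_setNullSigns_iff {q t : ℝ} {τ₁ τ₂ : Finset (Fin m)}
    (h₁ : τ₁ ⊆ H0) (h₂ : τ₂ ⊆ H0) (hc : #{j ∈ τ₁ | t ≤ |w j|} = #{j ∈ τ₂ | t ≤ |w j|}) :
    t ∈ knockoffPlusFeasible q (setNullSigns H0 τ₁ w) ↔
      t ∈ knockoffPlusFeasible q (setNullSigns H0 τ₂ w) := by
  rcases le_or_gt t 0 with ht | ht
  · exact iff_of_false (fun h => (pos_of_mem_knockoffPlusFeasible h).not_ge ht)
      (fun h => (pos_of_mem_knockoffPlusFeasible h).not_ge ht)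
  simp only [knockoffPlusFeasible, mem_filter, abs_setNullSigns]
  rw [card_filter_le_setNullSigns ht h₁, card_filter_le_setNullSigns ht h₂,
    card_filter_setNullSigns_le_neg ht h₁, card_filter_setNullSigns_le_neg ht h₂, hc]

/-- `V⁺(T) / (1 + V⁻(T))` for the null coordinates at the knockoff+ threshold `T`. -/
noncomputable def nullRatio (q : ℝ) (H0 : Finset (Fin m)) (v : Fin m → ℝ) : ℝ :=
  if h : (knockoffPlusFeasible q v).Nonempty then
    (#{j ∈ H0 | (knockoffPlusFeasible q v).min' h ≤ v j} : ℝ) /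
      (1 + #{j ∈ H0 | v j ≤ -(knockoffPlusFeasible q v).min' h})
  else 0

noncomputable def thresholdRank (q : ℝ) (H0 : Finset (Fin m)) (w : Fin m → ℝ) (e : ℕ → Fin m)
    (τ : Finset ℕ) : ℕ :=
  if h : (knockoffPlusFeasible q (setNullSigns H0 (τ.image e) w)).Nonempty then
    #{j ∈ H0 | (knockoffPlusFeasible q (setNullSigns H0 (τ.image e) w)).min' h ≤ |w j|}
  else 0

variable {q : ℝ} {e : ℕ → Fin m}

lemma thresholdRank_le (τ : Finset ℕ) : thresholdRank q H0 w e τ ≤ #H0 := by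
  unfold thresholdRank
  split_ifs
  exacts [card_filter_le _ _, Nat.zero_le _]

lemma le_thresholdRank_iff {k : ℕ} (hk : 0 < k) (τ : Finset ℕ) :
    k ≤ thresholdRank q H0 w e τ ↔ ∃ t ∈ knockoffPlusFeasible q (setNullSigns H0 (τ.image e) w),
      k ≤ #{j ∈ H0 | t ≤ |w j|} := by
  unfold thresholdRank
  split_ifs with h
  · refine ⟨fun hle => ⟨_, min'_mem _ h, hle⟩, fun ⟨t, ht, hkt⟩ => hkt.trans ?_⟩
    exact card_le_card (monotone_filter_right _ fun _ _ hj => (min'_le _ _ ht).trans hj)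
  · simp only [nonpos_iff_eq_zero, hk.ne', false_iff]
    exact fun ⟨t, ht, _⟩ => h ⟨t, ht⟩

lemma isPrefixStoppingTime_thresholdRank (hinj : Set.InjOn e (range #H0))
    (himage : (range #H0).image e = H0) (hanti : AntitoneOn ((fun j => |w j|) ∘ e) (range #H0)) :
    IsPrefixStoppingTime #H0 (thresholdRank q H0 w e) := by
  intro τ₁ h₁ τ₂ h₂ k hc hf
  rcases Nat.eq_zero_or_pos k with rfl | hk
  · simp
  rw [le_thresholdRank_iff hk, le_thresholdRank_iff hk]
  refine exists_congr fun t => ?_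
  by_cases hkt : k ≤ #{j ∈ H0 | t ≤ |w j|}
  · rw [mem_knockoffPlusFeasible_setNullSigns_iff (himage ▸ image_subset_image h₁)
      (himage ▸ image_subset_image h₂)]
    rw [card_filter_image_eq_prefixCard hinj himage hanti h₁,
      card_filter_image_eq_prefixCard hinj himage hanti h₂]
    exact prefixCard_eq_of_le hkt hc hf
  · simp [hkt]

lemma nullRatio_setNullSigns_image (hinj : Set.InjOn e (range #H0))
    (himage : (range #H0).image e = H0) (hanti : AntitoneOn ((fun j => |w j|) ∘ e) (range #H0))
    {τ : Finset ℕ} (hτ : τ ⊆ range #H0) :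
    nullRatio q H0 (setNullSigns H0 (τ.image e) w) = prefixRatio (thresholdRank q H0 w e τ) τ := by
  have hsub : τ.image e ⊆ H0 := himage ▸ image_subset_image hτ
  unfold nullRatio thresholdRank
  split_ifs with h
  · have hT := pos_of_mem_knockoffPlusFeasible (min'_mem _ h)
    have hcount := card_filter_image_eq_prefixCard hinj himage hanti hτ
      ((knockoffPlusFeasible q (setNullSigns H0 (τ.image e) w)).min' h)
    rw [filter_mem_le_setNullSigns hT hsub, filter_mem_setNullSigns_le_neg hT hsub,
      card_sdiff_of_subset (filter_subset_filter _ hsub), hcount, prefixRatio,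
      Nat.cast_sub (hcount ▸ card_le_card (filter_subset_filter _ hsub))]
    ring
  · exact (prefixRatio_zero τ).symm

theorem sum_nullRatio_setNullSigns_le (q : ℝ) (H0 : Finset (Fin m)) (w : Fin m → ℝ) :
    ∑ τ ∈ H0.powerset, nullRatio q H0 (setNullSigns H0 τ w) ≤ 2 ^ #H0 - 1 := by
  rcases H0.eq_empty_or_nonempty with rfl | ⟨j₀, -⟩
  · simp [nullRatio]
  have : Nonempty (Fin m) := ⟨j₀⟩
  obtain ⟨e, hinj, himage, hanti⟩ := exists_injOn_image_range_antitoneOn (fun j => |w j|) H0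
  have hpowerset : H0.powerset = (range #H0).powerset.image (·.image e) := by
    rw [← powerset_image, himage]
  rw [hpowerset, sum_image (image_injOn_powerset_of_injOn hinj)]
  rw [sum_congr rfl fun τ hτ =>
    nullRatio_setNullSigns_image (q := q) hinj himage hanti (mem_powerset.1 hτ)]
  exact sum_prefixRatio_le _ (fun τ _ => thresholdRank_le τ)
    (isPrefixStoppingTime_thresholdRank hinj himage hanti)

noncomputable def fdp (q : ℝ) (H0 : Finset (Fin m)) (v : Fin m → ℝ) : ℝ :=
  #(knockoffPlusSelected q v ∩ H0) / max 1 (#(knockoffPlusSelected q v) : ℝ)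

lemma fdp_le_mul_nullRatio (q : ℝ) (H0 : Finset (Fin m)) (v : Fin m → ℝ) :
    fdp q H0 v ≤ q * nullRatio q H0 v := by
  unfold fdp nullRatio knockoffPlusSelected
  split_ifs with h
  · set T := (knockoffPlusFeasible q v).min' h
    have hfeas := (mem_filter.1 (min'_mem _ h)).2.2
    have hneg : #{j ∈ H0 | v j ≤ -T} ≤ #{j | v j ≤ -T} :=
      card_le_card (filter_subset_filter _ (subset_univ H0))
    rw [filter_inter, univ_inter, mul_div_assoc', div_le_div_iff₀ (by positivity) (by positivity)]
    have hA : (0 : ℝ) ≤ #{j ∈ H0 | T ≤ v j} := Nat.cast_nonneg _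
    have hB : (1 : ℝ) + #{j ∈ H0 | v j ≤ -T} ≤ q * max 1 (#{j | T ≤ v j} : ℝ) :=
      le_trans (by exact_mod_cast Nat.add_le_add_left hneg 1) hfeas
    linarith [mul_le_mul_of_nonneg_left hB hA]
  · simp

lemma fdp_nonneg (q : ℝ) (H0 : Finset (Fin m)) (v : Fin m → ℝ) : 0 ≤ fdp q H0 v := by
  unfold fdp
  positivity

lemma fdp_le_one (q : ℝ) (H0 : Finset (Fin m)) (v : Fin m → ℝ) : fdp q H0 v ≤ 1 := by
  refine div_le_one_of_le₀ (le_max_of_le_right ?_) (by positivity)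
  exact_mod_cast card_le_card inter_subset_left

theorem sum_fdp_signFlip_le {q : ℝ} (hq : 0 ≤ q) (H0 : Finset (Fin m)) (w : Fin m → ℝ) :
    ∑ σ ∈ H0.powerset, fdp q H0 (signFlip σ w) ≤ q * 2 ^ #H0 :=
  calc ∑ σ ∈ H0.powerset, fdp q H0 (signFlip σ w)
      ≤ ∑ σ ∈ H0.powerset, q * nullRatio q H0 (signFlip σ w) :=
        sum_le_sum fun σ _ => fdp_le_mul_nullRatio q H0 _
    _ = q * ∑ τ ∈ H0.powerset, nullRatio q H0 (setNullSigns H0 τ w) := by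
        rw [← mul_sum, sum_powerset_signFlip (nullRatio q H0)]
    _ ≤ q * 2 ^ #H0 := by
        gcongr
        linarith [sum_nullRatio_setNullSigns_le q H0 w]

lemma mem_knockoffPlusSelected_iff {q : ℝ} {v : Fin m → ℝ} {j : Fin m} :
    j ∈ knockoffPlusSelected q v ↔ ∃ i, |v i| ∈ knockoffPlusFeasible q v ∧ |v i| ≤ v j := by
  unfold knockoffPlusSelected
  split_ifs with h
  · simp only [mem_filter, mem_univ, true_and]
    refine ⟨fun hle => ?_, fun ⟨i, hi, hle⟩ => (min'_le _ _ hi).trans hle⟩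
    obtain ⟨i, -, hi⟩ := mem_image.1 (mem_filter.1 (min'_mem _ h)).1
    exact ⟨i, hi ▸ min'_mem _ h, hi ▸ hle⟩
  · simp only [notMem_empty, false_iff]
    exact fun ⟨i, hi, _⟩ => h ⟨_, hi⟩

lemma measurable_card {X ι : Type*} [MeasurableSpace X] [Fintype ι] [DecidableEq ι]
    {s : X → Finset ι}
    (hs : ∀ i, MeasurableSet {x | i ∈ s x}) : Measurable fun x => (#(s x) : ℝ) := by
  have hsum : (fun x => (#(s x) : ℝ)) = fun x => ∑ i, if i ∈ s x then 1 else 0 := by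
    funext x
    simp
  rw [hsum]
  exact Finset.measurable_sum _ fun i _ => Measurable.ite (hs i) measurable_const measurable_const

lemma measurableSet_mem_knockoffPlusSelected (q : ℝ) (j : Fin m) :
    MeasurableSet {v : Fin m → ℝ | j ∈ knockoffPlusSelected q v} := by
  have habs (i : Fin m) : Measurable fun v : Fin m → ℝ => |v i| := (measurable_pi_apply i).abs
  have hfeas (i : Fin m) : MeasurableSet {v : Fin m → ℝ | |v i| ∈ knockoffPlusFeasible q v} := by
    simp only [knockoffPlusFeasible, mem_filter, mem_image_of_mem _ (mem_univ i), true_and,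
      Set.ofPred_and]
    refine (habs i (measurableSet_singleton 0)).compl.inter (measurableSet_le ?_ ?_)
    · exact measurable_const.add (measurable_card fun k =>
        by simpa using measurableSet_le (measurable_pi_apply k) (habs i).neg)
    · exact measurable_const.mul (measurable_const.max (measurable_card fun k =>
        by simpa using measurableSet_le (habs i) (measurable_pi_apply k)))
  simp only [mem_knockoffPlusSelected_iff, Set.ofPred_exists, Set.ofPred_and]
  exact MeasurableSet.iUnion fun i =>
    (hfeas i).inter (measurableSet_le (habs i) (measurable_pi_apply j))

lemma measurable_fdp (q : ℝ) (H0 : Finset (Fin m)) : Measurable (fdp q H0) := by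
  refine Measurable.div (measurable_card fun j => ?_)
    (measurable_const.max (measurable_card (measurableSet_mem_knockoffPlusSelected q)))
  simpa [Set.ofPred_and] using
    (measurableSet_mem_knockoffPlusSelected q j).inter (MeasurableSet.const (j ∈ H0))

section SignSymmetry

variable {Ω ι : Type*} [MeasurableSpace Ω] [DecidableEq ι] {μ : Measure Ω} {W : Ω → ι → ℝ}
  {H0 : Finset ι}

/-- The i.i.d. sign condition on the nulls. -/
def NullSignInvariant (μ : Measure Ω) (W : Ω → ι → ℝ) (H0 : Finset ι) : Prop :=
  ∀ ε : ι → ℝ, (∀ j, ε j = 1 ∨ ε j = -1) → (∀ j ∉ H0, ε j = 1) →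
    μ.map (fun ω => fun j => ε j * W ω j) = μ.map W

lemma integral_comp_signFlip (hW : Measurable W) (hsign : NullSignInvariant μ W H0)
    {f : (ι → ℝ) → ℝ} (hf : Measurable f) {σ : Finset ι} (hσ : σ ⊆ H0) :
    ∫ ω, f (signFlip σ (W ω)) ∂μ = ∫ ω, f (W ω) ∂μ := by
  have hflip : Measurable fun ω => signFlip σ (W ω) := (measurable_signFlip σ).comp hW
  rw [← integral_map hflip.aemeasurable hf.aestronglyMeasurable,
    ← integral_map hW.aemeasurable hf.aestronglyMeasurable]
  congr 1
  refine hsign _ (fun j => ?_) fun j hj => if_neg fun h => hj (hσ h)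
  by_cases hj : j ∈ σ <;> simp [hj]

theorem integral_le_of_sum_signFlip_le [IsProbabilityMeasure μ] (hW : Measurable W)
    (hsign : NullSignInvariant μ W H0)
    {f : (ι → ℝ) → ℝ} (hf : Measurable f) {C : ℝ} (hfC : ∀ v, ‖f v‖ ≤ C) {c : ℝ}
    (hsum : ∀ v, ∑ σ ∈ H0.powerset, f (signFlip σ v) ≤ c * 2 ^ #H0) :
    ∫ ω, f (W ω) ∂μ ≤ c := by
  have hint (σ : Finset ι) : Integrable (fun ω => f (signFlip σ (W ω))) μ :=
    Integrable.of_bound (hf.comp ((measurable_signFlip σ).comp hW)).aestronglyMeasurable C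
      (ae_of_all _ fun ω => hfC _)
  have haverage : 2 ^ #H0 * ∫ ω, f (W ω) ∂μ = ∫ ω, ∑ σ ∈ H0.powerset, f (signFlip σ (W ω)) ∂μ := by
    rw [integral_finsetSum _ fun σ _ => hint σ,
      sum_congr rfl fun σ hσ => integral_comp_signFlip hW hsign hf (mem_powerset.1 hσ),
      sum_const, card_powerset, nsmul_eq_mul, Nat.cast_pow, Nat.cast_ofNat]
  have hbound : ∫ ω, ∑ σ ∈ H0.powerset, f (signFlip σ (W ω)) ∂μ ≤ c * 2 ^ #H0 := by
    simpa using integral_mono (integrable_finsetSum _ fun σ _ => hint σ) (integrable_const _)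
      fun ω => hsum (W ω)
  refine le_of_mul_le_mul_left ?_ (pow_pos two_pos #H0)
  rw [haverage, mul_comm]
  exact hbound

end SignSymmetry

end KnockoffPlus

theorem knockoffPlus_fdr_control_general {Ω : Type*} [MeasurableSpace Ω]
    (μ : Measure Ω) [IsProbabilityMeasure μ]
    (W : Ω → Fin m → ℝ) (hW : Measurable W) (H0 : Finset (Fin m))
    (hsign : ∀ ε : Fin m → ℝ, (∀ j, ε j = 1 ∨ ε j = -1) →
      (∀ j ∉ H0, ε j = 1) →
      μ.map (fun ω => fun j => ε j * W ω j) = μ.map W)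
    (q : ℝ) (hq0 : 0 < q) :
    ∫ ω, ((knockoffPlusSelected q (W ω) ∩ H0).card : ℝ) /
        max 1 ((knockoffPlusSelected q (W ω)).card : ℝ) ∂μ ≤ q :=
  KnockoffPlus.integral_le_of_sum_signFlip_le hW hsign (KnockoffPlus.measurable_fdp q H0)
    (fun v => by
      rw [Real.norm_of_nonneg (KnockoffPlus.fdp_nonneg q H0 v)]
      exact KnockoffPlus.fdp_le_one q H0 v)
    (KnockoffPlus.sum_fdp_signFlip_le hq0.le H0)

/-- FDR control for the knockoff+ filter: if the null signs of the `W`-statistics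
are i.i.d. symmetric, i.e. flipping the signs of any subset of null coordinates
leaves the joint law invariant, then the expected false discovery proportion of
the knockoff+ selection is at most `q`. -/
theorem knockoffPlus_fdr_control {Ω : Type*} [MeasurableSpace Ω]
    (μ : Measure Ω) [IsProbabilityMeasure μ]
    (W : Ω → Fin m → ℝ) (hW : Measurable W) (H0 : Finset (Fin m))
    (hsign : ∀ ε : Fin m → ℝ, (∀ j, ε j = 1 ∨ ε j = -1) →
      (∀ j ∉ H0, ε j = 1) →
      μ.map (fun ω => fun j => ε j * W ω j) = μ.map W)
    (q : ℝ) (hq0 : 0 < q) (hq1 : q < 1) :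
    ∫ ω, ((knockoffPlusSelected q (W ω) ∩ H0).card : ℝ) /
        max 1 ((knockoffPlusSelected q (W ω)).card : ℝ) ∂μ ≤ q :=
  knockoffPlus_fdr_control_general μ W hW H0 hsign q hq0
end

section
/- Under the same i.i.d. sign-symmetry condition on null W-statistics, with the (non-plus) threshold T = min{ t ∈ {|W_j| : W_j ≠ 0} : #{j : W_j ≤ −t} / max(1, #{j : W_j ≥ t}) ≤ q }, the modified FDR is controlled: E[ #{j ∈ H_0 : W_j ≥ T} / ( #{j : W_j ≥ T} + 1/q ) ] ≤ q. -/
/-! Since `|Ŝ| ≥ V` and, at the threshold `T`, `#{j : W_j ≤ -T} ≤ q · max(1, |Ŝ|)`, the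
modified FDP is at most `q · V / (1 + V⁻)`, where `V` and `V⁻` count the nulls with `W_j ≥ T`
and `W_j ≤ -T`. Conditionally on the magnitudes, order the nulls by `|W_j|` and read their signs
as fair coins `ε`. Then `V / (1 + V⁻)` is the value, at the position `σ` of `T`, of the process
`#{i ≥ s : ε_i = +} / (1 + #{i ≥ s : ε_i = -})`. Given the coins below `s` and the multiset of
those above, the coins above `s` are exchangeable; this makes the process a supermartingale in
`s`, `σ` is a stopping time, and the process starts with mean at most `1` (optional stopping). -/

open MeasureTheory ProbabilityTheory Finset

variable {m : ℕ}

/-- Feasible thresholds for the (non-plus) knockoff filter at level `q`: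
nonzero magnitudes `t = |W_j|` with `#{j : W_j ≤ -t} ≤ q · max(1, #{j : W_j ≥ t})`. -/
noncomputable def knockoffFeasible (q : ℝ) (W : Fin m → ℝ) : Finset ℝ :=
  (Finset.univ.image fun j => |W j|).filter fun t =>
    t ≠ 0 ∧
      (((Finset.univ.filter fun j => W j ≤ -t).card : ℝ)) ≤
        q * max 1 ((Finset.univ.filter fun j => t ≤ W j).card : ℝ)

/-- The knockoff selected set `Ŝ = {j : W_j ≥ T_q}`, empty when no threshold is
feasible (`T_q = +∞`). -/
noncomputable def knockoffSelected (q : ℝ) (W : Fin m → ℝ) : Finset (Fin m) :=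
  if h : (knockoffFeasible q W).Nonempty then
    Finset.univ.filter fun j => (knockoffFeasible q W).min' h ≤ W j
  else ∅

lemma card_filter_comp_swap {ι : Type*} [Fintype ι] [DecidableEq ι] {P Q : ι → Prop}
    [DecidablePred P] [DecidablePred Q] {i k : ι} (hi : P i) (hk : P k) :
    #{j | P j ∧ Q (Equiv.swap i k j)} = #{j | P j ∧ Q j} := by
  refine card_equiv (Equiv.swap i k) fun j => ?_
  have hP : P (Equiv.swap i k j) ↔ P j := by
    rw [Equiv.swap_apply_def]
    split_ifs with h₁ h₂ <;> simp_all
  simp [hP]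

lemma card_filter_le_iff_of_antitone {n : ℕ} {p : Fin n → Prop} [DecidablePred p]
    (hp : Antitone p) (i : Fin n) : #{k | p k} ≤ i ↔ ¬ p i := by
  constructor
  · intro h hpi
    have hsub : Iic i ⊆ ({k | p k} : Finset (Fin n)) := fun k hk =>
      mem_filter.2 ⟨mem_univ k, hp (mem_Iic.1 hk) hpi⟩
    have := card_le_card hsub
    rw [Fin.card_Iic] at this
    omega
  · intro hpi
    have hsub : ({k | p k} : Finset (Fin n)) ⊆ Iio i := fun k hk =>
      mem_Iio.2 (lt_of_not_ge fun hik => hpi (hp hik (mem_filter.1 hk).2))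
    simpa using card_le_card hsub

lemma exists_equiv_fin_monotone {ι α : Type*} [Fintype ι] [LinearOrder α] (f : ι → α) :
    ∃ e : Fin (Fintype.card ι) ≃ ι, Monotone (f ∘ e) :=
  ⟨(Tuple.sort (f ∘ (Fintype.equivFin ι).symm)).trans (Fintype.equivFin ι).symm,
    Tuple.monotone_sort (f ∘ (Fintype.equivFin ι).symm)⟩

lemma measurable_card_filter {α ι : Type*} [MeasurableSpace α] (s : Finset ι)
    {p : α → ι → Prop} [∀ x i, Decidable (p x i)] (hp : ∀ i, MeasurableSet {x | p x i}) :
    Measurable fun x => (#{i ∈ s | p x i} : ℝ) := by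
  simp_rw [natCast_card_filter]
  exact measurable_sum s fun i _ => Measurable.ite (hp i) measurable_const measurable_const

lemma integral_le_of_sum_comp_le {α ι : Type*} [MeasurableSpace α] [Fintype ι] [Nonempty ι]
    {ν : Measure α} [IsProbabilityMeasure ν] {φ : ι → α → α}
    (hφ : ∀ i, MeasurePreserving (φ i) ν ν) {g : α → ℝ} (hg : Integrable g ν) {C : ℝ}
    (hsum : ∀ x, ∑ i, g (φ i x) ≤ Fintype.card ι * C) :
    ∫ x, g x ∂ν ≤ C := by
  have hcomp : ∀ i, ∫ x, g (φ i x) ∂ν = ∫ x, g x ∂ν := fun i => by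
    have hmap := (hφ i).map_eq
    rw [← integral_map (hφ i).measurable.aemeasurable
      (by rw [hmap]; exact hg.aestronglyMeasurable), hmap]
  have hint : ∀ i, Integrable (fun x => g (φ i x)) ν := fun i =>
    (hφ i).integrable_comp_of_integrable hg
  have hcard : (0 : ℝ) < Fintype.card ι := by exact_mod_cast Fintype.card_pos
  refine le_of_mul_le_mul_left ?_ hcard
  calc Fintype.card ι * ∫ x, g x ∂ν = ∫ x, ∑ i, g (φ i x) ∂ν := by
        rw [integral_finsetSum _ fun i _ => hint i]
        simp [hcomp]
    _ ≤ ∫ _x, Fintype.card ι * C ∂ν :=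
        integral_mono (integrable_finsetSum _ fun i _ => hint i) (integrable_const _) hsum
    _ = Fintype.card ι * C := by simp

section SignSequence

variable {n : ℕ}

def tailCount (ε : Fin n → Bool) (s : ℕ) (b : Bool) : ℕ :=
  #{i : Fin n | s ≤ (i : ℕ) ∧ ε i = b}

noncomputable def tailRatio (ε : Fin n → Bool) (s : ℕ) : ℝ :=
  tailCount ε s true / (1 + tailCount ε s false)

lemma tailCount_eq_card_filter_Ici (ε : Fin n → Bool) (s : Fin n) (b : Bool) :
    tailCount ε s b = #{k ∈ Ici s | ε k = b} := by
  simp only [tailCount, ← filter_le_eq_Ici, filter_filter, Fin.le_def]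

lemma tailCount_true_add_false (ε : Fin n → Bool) (s : Fin n) :
    tailCount ε s true + tailCount ε s false = #(Ici s) := by
  rw [← card_filter_add_card_filter_not (s := Ici s) (fun i => ε i = true)]
  simp only [tailCount_eq_card_filter_Ici, Bool.not_eq_true]

lemma tailCount_comp_swap (ε : Fin n → Bool) {s : ℕ} {i k : Fin n} (hi : s ≤ i)
    (hk : s ≤ k) (b : Bool) : tailCount (ε ∘ Equiv.swap i k) s b = tailCount ε s b :=
  card_filter_comp_swap (P := fun j : Fin n => s ≤ (j : ℕ)) (Q := fun j => ε j = b) hi hk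

lemma tailCount_eq_succ_add (ε : Fin n → Bool) (s : Fin n) (b : Bool) :
    tailCount ε s b = tailCount ε (s + 1) b + if ε s = b then 1 else 0 := by
  unfold tailCount
  split_ifs with h
  · rw [← card_insert_of_notMem (a := s) (by simp)]
    congr 1
    ext i
    simp only [mem_filter, mem_univ, true_and, mem_insert, ← Fin.val_inj]
    grind
  · rw [add_zero]
    congr 1
    ext i
    simp only [mem_filter, mem_univ, true_and]
    grind

lemma tailCount_zero (ε : Fin n → Bool) (b : Bool) :
    (tailCount ε 0 b : ℝ) = ∑ i, if ε i = b then 1 else 0 := by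
  simp only [tailCount, zero_le, true_and]
  exact natCast_card_filter _ _

lemma tailCount_update_false {ε : Fin n → Bool} {i : Fin n} (hi : ε i = true) :
    tailCount (Function.update ε i false) 0 false = tailCount ε 0 false + 1 := by
  rw [tailCount, tailCount, ← card_insert_of_notMem (a := i) (by simp [hi])]
  congr 1
  ext j
  by_cases hj : j = i <;> simp [hj, Function.update_of_ne]

lemma sum_tailRatio_zero_le : ∑ ε : Fin n → Bool, tailRatio ε 0 ≤ 2 ^ n := by
  have hflip : ∀ i, ∑ ε : Fin n → Bool,
      (if ε i = true then 1 / (1 + tailCount ε 0 false : ℝ) else 0) =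
      ∑ ε : Fin n → Bool, if ε i = false then 1 / (tailCount ε 0 false : ℝ) else 0 := by
    intro i
    have hinv : Function.Involutive fun ε : Fin n → Bool => Function.update ε i (!ε i) :=
      fun ε => by simp
    refine Fintype.sum_equiv (hinv.toPerm _) _ _ fun ε => ?_
    cases hε : ε i
    · simp [hε]
    · simp [hε, tailCount_update_false hε, add_comm]
  calc ∑ ε : Fin n → Bool, tailRatio ε 0
      = ∑ ε : Fin n → Bool, ∑ i,
          if ε i = true then 1 / (1 + tailCount ε 0 false : ℝ) else 0 := by
        refine sum_congr rfl fun ε _ => ?_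
        rw [tailRatio, tailCount_zero ε true, div_eq_mul_one_div, sum_mul]
        simp
    _ = ∑ i, ∑ ε : Fin n → Bool,
          if ε i = true then 1 / (1 + tailCount ε 0 false : ℝ) else 0 :=
        sum_comm
    _ = ∑ ε : Fin n → Bool,
          (tailCount ε 0 false : ℝ) * (tailCount ε 0 false : ℝ)⁻¹ := by
        rw [sum_congr rfl fun i _ => hflip i, sum_comm]
        refine sum_congr rfl fun ε _ => ?_
        rw [← sum_filter, sum_const, nsmul_eq_mul, one_div]
        simp [tailCount]
    _ ≤ ∑ _ε : Fin n → Bool, (1 : ℝ) := sum_le_sum fun ε _ => mul_inv_le_one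
    _ = 2 ^ n := by simp

-- Swapping `s` with a uniform `k ≥ s` and then dropping coordinate `s` removes a uniform
-- coordinate of the tail; averaged this way, the ratio does not increase.
lemma sum_tailRatio_comp_swap_le (ε : Fin n → Bool) (s : Fin n) :
    ∑ k ∈ Ici s, tailRatio (ε ∘ Equiv.swap s k) (s + 1) ≤ #(Ici s) * tailRatio ε s := by
  have hremove : ∀ k ∈ Ici s, ∀ b, (tailCount (ε ∘ Equiv.swap s k) (s + 1) b : ℝ) =
      tailCount ε s b - if ε k = b then 1 else 0 := by
    intro k hk b
    have h := tailCount_eq_succ_add (ε ∘ Equiv.swap s k) s b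
    rw [tailCount_comp_swap ε le_rfl (mem_Ici.1 hk : s ≤ k), Function.comp_apply,
      Equiv.swap_apply_left] at h
    rw [h]
    push_cast
    ring
  have hterm : ∀ k ∈ Ici s, tailRatio (ε ∘ Equiv.swap s k) (s + 1) =
      if ε k then ((tailCount ε s true : ℝ) - 1) / (1 + tailCount ε s false)
      else (tailCount ε s true : ℝ) / tailCount ε s false := by
    intro k hk
    rw [tailRatio, hremove k hk, hremove k hk]
    cases ε k <;> simp
  rw [sum_congr rfl hterm, sum_ite, sum_const, sum_const, nsmul_eq_mul, nsmul_eq_mul,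
    ← tailCount_true_add_false]
  simp only [Bool.not_eq_true, ← tailCount_eq_card_filter_Ici, tailRatio, Nat.cast_add]
  have hT : (0 : ℝ) ≤ tailCount ε s true := Nat.cast_nonneg _
  have hF : (0 : ℝ) ≤ tailCount ε s false := Nat.cast_nonneg _
  generalize (tailCount ε s true : ℝ) = T, (tailCount ε s false : ℝ) = F at hT hF ⊢
  rcases hF.eq_or_lt with rfl | hF
  · simp only [add_zero, div_one, zero_mul, mul_comm T]
    nlinarith
  · rw [mul_div_cancel₀ T hF.ne']
    apply le_of_eq
    field_simp
    ring

-- The hypothesis on `A` says that `A` is a union of atoms of the filtration at time `s`.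
lemma sum_tailRatio_succ_le {A : Finset (Fin n → Bool)} (s : Fin n)
    (hA : ∀ k, s ≤ k → ∀ ε ∈ A, ε ∘ Equiv.swap s k ∈ A) :
    ∑ ε ∈ A, tailRatio ε (s + 1) ≤ ∑ ε ∈ A, tailRatio ε s := by
  have hswap : ∀ k ∈ Ici s, ∑ ε ∈ A, tailRatio ε (s + 1) =
      ∑ ε ∈ A, tailRatio (ε ∘ Equiv.swap s k) (s + 1) := by
    intro k hk
    have hinv (ε : Fin n → Bool) : ε ∘ Equiv.swap s k ∘ Equiv.swap s k = ε := by
      ext i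
      simp
    exact (sum_nbij' (· ∘ Equiv.swap s k) (· ∘ Equiv.swap s k) (hA k (mem_Ici.1 hk))
      (hA k (mem_Ici.1 hk)) (fun ε _ => hinv ε) (fun ε _ => hinv ε) fun _ _ => rfl).symm
  have hpos : (0 : ℝ) < #(Ici s) := by
    exact_mod_cast card_pos.2 ⟨s, mem_Ici.2 le_rfl⟩
  refine le_of_mul_le_mul_left ?_ hpos
  calc (#(Ici s) : ℝ) * ∑ ε ∈ A, tailRatio ε (s + 1)
      = ∑ k ∈ Ici s, ∑ ε ∈ A, tailRatio (ε ∘ Equiv.swap s k) (s + 1) := by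
        rw [← sum_congr rfl hswap, sum_const, nsmul_eq_mul]
    _ = ∑ ε ∈ A, ∑ k ∈ Ici s, tailRatio (ε ∘ Equiv.swap s k) (s + 1) := sum_comm
    _ ≤ ∑ ε ∈ A, #(Ici s) * tailRatio ε s :=
        sum_le_sum fun ε _ => sum_tailRatio_comp_swap_le ε s
    _ = #(Ici s) * ∑ ε ∈ A, tailRatio ε s := (mul_sum _ _ _).symm

lemma sum_tailRatio_min_succ_le {σ : (Fin n → Bool) → ℕ} (s : Fin n)
    (hσ : ∀ k, s ≤ k → ∀ ε, σ (ε ∘ Equiv.swap s k) ≤ s ↔ σ ε ≤ s) :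
    ∑ ε, tailRatio ε (min (σ ε) (s + 1)) ≤ ∑ ε, tailRatio ε (min (σ ε) s) := by
  rw [← sum_filter_add_sum_filter_not univ (fun ε => s < σ ε),
    ← sum_filter_add_sum_filter_not univ (fun ε => s < σ ε)]
  refine add_le_add ?_ (le_of_eq (sum_congr rfl fun ε hε => ?_))
  · have hmin : ∀ ε ∈ ({ε | (s : ℕ) < σ ε} : Finset _),
        min (σ ε) (s + 1) = s + 1 ∧ min (σ ε) s = s := fun ε hε => by
      simp only [mem_filter, mem_univ, true_and] at hε
      omega
    rw [sum_congr rfl fun ε hε => congrArg _ (hmin ε hε).1,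
      sum_congr rfl fun ε hε => congrArg _ (hmin ε hε).2]
    refine sum_tailRatio_succ_le s fun k hk ε hε => ?_
    simp only [mem_filter, mem_univ, true_and, ← not_le] at hε ⊢
    rwa [hσ k hk]
  · simp only [mem_filter, mem_univ, true_and, not_lt] at hε
    rw [min_eq_left (by omega), min_eq_left hε]

theorem sum_tailRatio_stopped_le (σ : (Fin n → Bool) → ℕ) (hσn : ∀ ε, σ ε ≤ n)
    (hσ : ∀ s k : Fin n, s ≤ k → ∀ ε, σ (ε ∘ Equiv.swap s k) ≤ s ↔ σ ε ≤ s) :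
    ∑ ε, tailRatio ε (σ ε) ≤ 2 ^ n := by
  have hstopped : ∀ s ≤ n,
      ∑ ε, tailRatio ε (min (σ ε) s) ≤ ∑ ε : Fin n → Bool, tailRatio ε 0 := by
    intro s hs
    induction s with
    | zero => simp
    | succ s ih => exact (sum_tailRatio_min_succ_le ⟨s, hs⟩ (hσ _)).trans (ih (by omega))
  calc ∑ ε, tailRatio ε (σ ε) = ∑ ε, tailRatio ε (min (σ ε) n) := by simp [hσn]
    _ ≤ 2 ^ n := (hstopped n le_rfl).trans sum_tailRatio_zero_le

end SignSequence

def Beyond : Bool → ℝ → ℝ → Prop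
  | true, t, x => t ≤ x
  | false, t, x => x ≤ -t

noncomputable instance : ∀ b t x, Decidable (Beyond b t x)
  | true, t, x => inferInstanceAs (Decidable (t ≤ x))
  | false, t, x => inferInstanceAs (Decidable (x ≤ -t))

lemma exists_mem_beyond_iff_min' {F : Finset ℝ} (hF : F.Nonempty) (b : Bool) (x : ℝ) :
    (∃ t ∈ F, Beyond b t x) ↔ Beyond b (F.min' hF) x := by
  refine ⟨fun ⟨t, ht, hx⟩ => ?_, fun hx => ⟨_, min'_mem F hF, hx⟩⟩
  cases b
  · exact hx.trans (neg_le_neg (min'_le F t ht))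
  · exact (min'_le F t ht).trans hx

lemma beyond_cond_iff {b e : Bool} {t a : ℝ} (ht : 0 < t) (ha : 0 ≤ a) :
    Beyond b t (cond e a (-a)) ↔ t ≤ a ∧ e = b := by
  cases b <;> cases e <;> simp only [Beyond, cond_true, cond_false, neg_le_neg_iff, and_true,
    and_false, iff_false, reduceCtorEq] <;> intro h <;> linarith

lemma measurableSet_beyond {α : Type*} [MeasurableSpace α] (b : Bool) {f g : α → ℝ}
    (hf : Measurable f) (hg : Measurable g) : MeasurableSet {x | Beyond b (f x) (g x)} := by
  cases b
  · exact measurableSet_le hg hf.neg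
  · exact measurableSet_le hf hg

section Knockoff

variable {q t : ℝ} {v : Fin m → ℝ}

lemma mem_knockoffFeasible_iff : t ∈ knockoffFeasible q v ↔ (∃ j, |v j| = t) ∧ t ≠ 0 ∧
    (#{j | Beyond false t (v j)} : ℝ) ≤ q * max 1 (#{j | Beyond true t (v j)} : ℝ) := by
  simp only [knockoffFeasible, mem_filter, mem_image, mem_univ, true_and]
  rfl

lemma pos_of_mem_knockoffFeasible (ht : t ∈ knockoffFeasible q v) : 0 < t := by
  obtain ⟨⟨j, rfl⟩, h0, -⟩ := mem_knockoffFeasible_iff.1 ht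
  exact (abs_nonneg _).lt_of_ne' h0

lemma mem_knockoffSelected {j : Fin m} :
    j ∈ knockoffSelected q v ↔ ∃ t ∈ knockoffFeasible q v, Beyond true t (v j) := by
  unfold knockoffSelected
  split_ifs with h
  · rw [exists_mem_beyond_iff_min' h]
    simp only [mem_filter, mem_univ, true_and]
    rfl
  · simp only [notMem_empty, false_iff]
    exact fun ⟨t, ht, _⟩ => h ⟨t, ht⟩

end Knockoff

lemma measurableSet_abs_mem_knockoffFeasible (q : ℝ) (j : Fin m) :
    MeasurableSet {v : Fin m → ℝ | |v j| ∈ knockoffFeasible q v} := by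
  have habs : Measurable fun v : Fin m → ℝ => |v j| := (measurable_pi_apply j).abs
  simp only [mem_knockoffFeasible_iff, exists_apply_eq_apply, true_and, Set.ofPred_and]
  refine (measurableSet_singleton 0).compl.preimage habs |>.inter (measurableSet_le ?_ ?_)
  · exact measurable_card_filter _ fun i => measurableSet_beyond false habs (measurable_pi_apply i)
  · exact (measurable_const.max (measurable_card_filter _ fun i =>
      measurableSet_beyond true habs (measurable_pi_apply i))).const_mul q

lemma measurableSet_exists_mem_knockoffFeasible (q : ℝ) {R : ℝ → (Fin m → ℝ) → Prop}
    (hR : ∀ j, MeasurableSet {v | R |v j| v}) :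
    MeasurableSet {v | ∃ t ∈ knockoffFeasible q v, R t v} := by
  have hunion : {v | ∃ t ∈ knockoffFeasible q v, R t v} =
      ⋃ j, {v | |v j| ∈ knockoffFeasible q v} ∩ {v | R |v j| v} := by
    ext v
    simp only [Set.mem_ofPred_eq, Set.mem_iUnion, Set.mem_inter_iff]
    constructor
    · rintro ⟨t, ht, hR⟩
      obtain ⟨j, rfl⟩ := (mem_knockoffFeasible_iff.1 ht).1
      exact ⟨j, ht, hR⟩
    · rintro ⟨j, ht, hR⟩
      exact ⟨_, ht, hR⟩
  rw [hunion]
  exact .iUnion fun j => (measurableSet_abs_mem_knockoffFeasible q j).inter (hR j)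

-- `nullCount q H0 v true` is `V` and `nullCount q H0 v false` is `V⁻`.
noncomputable def nullCount (q : ℝ) (H0 : Finset (Fin m)) (v : Fin m → ℝ) (b : Bool) : ℕ :=
  #{j ∈ H0 | ∃ t ∈ knockoffFeasible q v, Beyond b t (v j)}

noncomputable def nullRatio (q : ℝ) (H0 : Finset (Fin m)) (v : Fin m → ℝ) : ℝ :=
  nullCount q H0 v true / (1 + nullCount q H0 v false)

section NullRatio

variable {q : ℝ} {H0 : Finset (Fin m)} {v : Fin m → ℝ}

lemma card_knockoffSelected_inter : #(knockoffSelected q v ∩ H0) = nullCount q H0 v true := by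
  rw [inter_comm, ← filter_mem_eq_inter, nullCount]
  exact congrArg card (filter_congr fun j _ => mem_knockoffSelected)

lemma nullRatio_nonneg : 0 ≤ nullRatio q H0 v := by
  unfold nullRatio
  positivity

lemma nullRatio_le_card : nullRatio q H0 v ≤ #H0 := by
  unfold nullRatio
  refine (div_le_self (Nat.cast_nonneg _) (by simp)).trans ?_
  exact_mod_cast card_filter_le _ _

lemma modifiedFDP_le_mul_nullRatio (hq : 0 < q) :
    (#(knockoffSelected q v ∩ H0) : ℝ) / (#(knockoffSelected q v) + 1 / q) ≤
      q * nullRatio q H0 v := by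
  rw [card_knockoffSelected_inter, nullRatio]
  rcases Nat.eq_zero_or_pos (nullCount q H0 v true) with hV | hV
  · simp [hV]
  have hF : (knockoffFeasible q v).Nonempty := by
    obtain ⟨j, hj⟩ := card_pos.1 hV
    obtain ⟨t, ht, -⟩ := (mem_filter.1 hj).2
    exact ⟨t, ht⟩
  set T := (knockoffFeasible q v).min' hF
  have hsel : knockoffSelected q v = ({j | Beyond true T (v j)} : Finset (Fin m)) := by
    simp only [knockoffSelected, dif_pos hF]
    rfl
  have hVR : nullCount q H0 v true ≤ #(knockoffSelected q v) :=
    card_le_card fun j hj => mem_knockoffSelected.2 (mem_filter.1 hj).2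
  have hneg : nullCount q H0 v false ≤ #{j | Beyond false T (v j)} :=
    card_le_card fun j hj =>
      mem_filter.2 ⟨mem_univ j, (exists_mem_beyond_iff_min' hF _ _).1 (mem_filter.1 hj).2⟩
  have hfeas :
      (#{j | Beyond false T (v j)} : ℝ) ≤ q * max 1 (#{j | Beyond true T (v j)} : ℝ) :=
    (mem_knockoffFeasible_iff.1 (min'_mem _ hF)).2.2
  rw [← hsel, max_eq_right (by exact_mod_cast hV.trans_le hVR)] at hfeas
  have hVneg : (nullCount q H0 v false : ℝ) ≤ q * #(knockoffSelected q v) :=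
    (Nat.cast_le.2 hneg).trans hfeas
  calc (nullCount q H0 v true : ℝ) / (#(knockoffSelected q v) + 1 / q)
      = q * nullCount q H0 v true / (q * #(knockoffSelected q v) + 1) := by
        field_simp
    _ ≤ q * nullCount q H0 v true / (1 + nullCount q H0 v false) :=
        div_le_div_of_nonneg_left (by positivity) (by positivity) (by linarith)
    _ = q * (nullCount q H0 v true / (1 + nullCount q H0 v false)) := mul_div_assoc _ _ _

end NullRatio

lemma measurable_nullRatio (q : ℝ) (H0 : Finset (Fin m)) : Measurable (nullRatio q H0) := by
  have hcount : ∀ b, Measurable fun v => (nullCount q H0 v b : ℝ) := fun b =>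
    measurable_card_filter H0 fun j => measurableSet_exists_mem_knockoffFeasible q fun j' =>
      measurableSet_beyond b (measurable_pi_apply j').abs (measurable_pi_apply j)
  exact (hcount true).div (measurable_const.add (hcount false))

lemma integrable_nullRatio {α : Type*} [MeasurableSpace α] {μ : Measure α} [IsFiniteMeasure μ]
    {q : ℝ} {H0 : Finset (Fin m)} {X : α → Fin m → ℝ} (hX : Measurable X) :
    Integrable (fun x => nullRatio q H0 (X x)) μ :=
  .of_bound ((measurable_nullRatio q H0).comp hX).aestronglyMeasurable #H0 <|
    ae_of_all _ fun x => by
      rw [Real.norm_of_nonneg nullRatio_nonneg]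
      exact nullRatio_le_card

noncomputable def nullSignVec (H0 : Finset (Fin m)) (δ : H0 → Bool) : Fin m → ℝ := fun j =>
  if h : j ∈ H0 then cond (δ ⟨j, h⟩) (-1) 1 else 1

lemma nullSignVec_eq_one_or_neg_one {H0 : Finset (Fin m)} (δ : H0 → Bool) (j : Fin m) :
    nullSignVec H0 δ j = 1 ∨ nullSignVec H0 δ j = -1 := by
  unfold nullSignVec
  split_ifs with hj
  · cases δ ⟨j, hj⟩ <;> simp
  · simp

lemma nullSignVec_of_notMem {H0 : Finset (Fin m)} (δ : H0 → Bool) {j : Fin m} (hj : j ∉ H0) :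
    nullSignVec H0 δ j = 1 :=
  dif_neg hj

section SortedNulls

variable {H0 : Finset (Fin m)} {c : ℕ} (w : Fin m → ℝ) (ord : Fin c ≃ H0)

lemma card_filter_eq_card_filter_equiv (P : Fin m → Prop) [DecidablePred P] :
    #{j ∈ H0 | P j} = #{i | P (ord i)} := by
  symm
  refine card_bij (fun i _ => (ord i : Fin m)) (fun i hi => ?_) (fun i _ i' _ h => ?_)
    fun j hj => ?_
  · exact mem_filter.2 ⟨(ord i).2, (mem_filter.1 hi).2⟩
  · exact ord.injective (Subtype.ext h)
  · obtain ⟨hj, hP⟩ := mem_filter.1 hj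
    exact ⟨ord.symm ⟨j, hj⟩, mem_filter.2 ⟨mem_univ _, by simpa using hP⟩, by simp⟩

noncomputable def withNullSigns (ε : Fin c → Bool) : Fin m → ℝ := fun j =>
  if h : j ∈ H0 then cond (ε (ord.symm ⟨j, h⟩)) |w j| (-|w j|) else w j

noncomputable def nullSignsEquiv : (H0 → Bool) ≃ (Fin c → Bool) where
  toFun δ i := xor (δ (ord i)) (decide (0 ≤ w (ord i)))
  invFun ε j := xor (ε (ord.symm j)) (decide (0 ≤ w j))
  left_inv δ := by ext j; simp
  right_inv ε := by ext i; simp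

-- Position of the knockoff threshold among the sorted null magnitudes (`c` if none is feasible).
noncomputable def stopIndex (q : ℝ) (ε : Fin c → Bool) : ℕ :=
  #{i | ∀ t ∈ knockoffFeasible q (withNullSigns w ord ε), |w (ord i)| < t}

variable {w ord}

lemma withNullSigns_apply_equiv (ε : Fin c → Bool) (i : Fin c) :
    withNullSigns w ord ε (ord i) = cond (ε i) |w (ord i)| (-|w (ord i)|) := by
  simp [withNullSigns]

lemma withNullSigns_of_notMem (ε : Fin c → Bool) {j : Fin m} (hj : j ∉ H0) :
    withNullSigns w ord ε j = w j :=
  dif_neg hj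

lemma abs_withNullSigns (ε : Fin c → Bool) (j : Fin m) : |withNullSigns w ord ε j| = |w j| := by
  unfold withNullSigns
  split_ifs
  · cases ε _ <;> simp
  · rfl

lemma nullSignVec_mul_eq_withNullSigns (δ : H0 → Bool) :
    (fun j => nullSignVec H0 δ j * w j) = withNullSigns w ord (nullSignsEquiv w ord δ) := by
  funext j
  by_cases hj : j ∈ H0
  · obtain ⟨i, rfl⟩ : ∃ i, (ord i : Fin m) = j := ⟨ord.symm ⟨j, hj⟩, by simp⟩
    rw [withNullSigns_apply_equiv]
    simp only [nullSignVec, dif_pos (ord i).2, nullSignsEquiv, Equiv.coe_fn_mk]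
    cases δ (ord i) <;> by_cases hw : 0 ≤ w (ord i) <;>
      simp [hw, abs_of_nonneg, abs_of_neg (not_le.1 hw)]
  · rw [nullSignVec_of_notMem δ hj, one_mul, withNullSigns_of_notMem _ hj]

lemma beyond_withNullSigns_apply_equiv_iff {t : ℝ} (ht : 0 < t) {ε : Fin c → Bool}
    {i : Fin c} {b : Bool} :
    Beyond b t (withNullSigns w ord ε (ord i)) ↔ t ≤ |w (ord i)| ∧ ε i = b := by
  rw [withNullSigns_apply_equiv, beyond_cond_iff ht (abs_nonneg _)]

lemma card_beyond_withNullSigns {t : ℝ} (ht : 0 < t) (ε : Fin c → Bool) (b : Bool) :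
    #{j | Beyond b t (withNullSigns w ord ε j)} =
      #{j | j ∉ H0 ∧ Beyond b t (w j)} + #{i | t ≤ |w (ord i)| ∧ ε i = b} := by
  rw [← card_filter_add_card_filter_not (s := {j | Beyond b t (withNullSigns w ord ε j)})
    (· ∈ H0), add_comm, filter_filter, filter_filter]
  congr 1
  · refine congrArg card (filter_congr fun j _ => ?_)
    rw [and_comm]
    exact and_congr_right fun hj => by rw [withNullSigns_of_notMem ε hj]
  · have hnull : ({j | Beyond b t (withNullSigns w ord ε j) ∧ j ∈ H0} : Finset (Fin m)) =
        {j ∈ H0 | Beyond b t (withNullSigns w ord ε j)} := by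
      ext j
      simp [and_comm]
    rw [hnull, card_filter_eq_card_filter_equiv ord]
    exact congrArg card (filter_congr fun i _ => beyond_withNullSigns_apply_equiv_iff ht)

variable {q : ℝ}

lemma stopIndex_le_iff (hmono : Monotone fun i => |w (ord i)|) (ε : Fin c → Bool) (i : Fin c) :
    stopIndex w ord q ε ≤ i ↔
      ∃ t ∈ knockoffFeasible q (withNullSigns w ord ε), t ≤ |w (ord i)| := by
  have hanti : Antitone fun i =>
      ∀ t ∈ knockoffFeasible q (withNullSigns w ord ε), |w (ord i)| < t :=
    fun i j hij h t ht => (hmono hij).trans_lt (h t ht)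
  rw [stopIndex, card_filter_le_iff_of_antitone hanti]
  simp only [not_forall, not_lt, exists_prop]

lemma nullCount_withNullSigns (hmono : Monotone fun i => |w (ord i)|) (ε : Fin c → Bool)
    (b : Bool) :
    nullCount q H0 (withNullSigns w ord ε) b = tailCount ε (stopIndex w ord q ε) b := by
  rw [nullCount, card_filter_eq_card_filter_equiv ord, tailCount]
  refine congrArg card (filter_congr fun i _ => ?_)
  rw [stopIndex_le_iff hmono]
  constructor
  · rintro ⟨t, ht, hb⟩
    obtain ⟨hta, rfl⟩ :=
      (beyond_withNullSigns_apply_equiv_iff (pos_of_mem_knockoffFeasible ht)).1 hb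
    exact ⟨⟨t, ht, hta⟩, rfl⟩
  · rintro ⟨⟨t, ht, hta⟩, rfl⟩
    exact ⟨t, ht,
      (beyond_withNullSigns_apply_equiv_iff (pos_of_mem_knockoffFeasible ht)).2 ⟨hta, rfl⟩⟩

-- Feasibility of a threshold `t ≤ |w (ord s)|` only sees how many of the coordinates `≥ s` are
-- positive, so it is unchanged by permuting them.
lemma stopIndex_comp_swap_le_iff (hmono : Monotone fun i => |w (ord i)|) (s k : Fin c)
    (hsk : s ≤ k) (ε : Fin c → Bool) :
    stopIndex w ord q (ε ∘ Equiv.swap s k) ≤ s ↔ stopIndex w ord q ε ≤ s := by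
  have hfeas : ∀ t ≤ |w (ord s)|,
      t ∈ knockoffFeasible q (withNullSigns w ord (ε ∘ Equiv.swap s k)) ↔
        t ∈ knockoffFeasible q (withNullSigns w ord ε) := by
    intro t hts
    rcases le_or_gt t 0 with ht | ht
    · exact iff_of_false (fun h => ht.not_gt (pos_of_mem_knockoffFeasible h))
        fun h => ht.not_gt (pos_of_mem_knockoffFeasible h)
    · have hswap : ∀ b, #{i | t ≤ |w (ord i)| ∧ ε (Equiv.swap s k i) = b} =
          #{i | t ≤ |w (ord i)| ∧ ε i = b} := fun b =>
        card_filter_comp_swap (P := fun i => t ≤ |w (ord i)|) (Q := fun j => ε j = b) hts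
          (hts.trans (hmono hsk))
      simp only [mem_knockoffFeasible_iff, abs_withNullSigns, card_beyond_withNullSigns ht,
        Function.comp_apply, hswap]
  rw [stopIndex_le_iff hmono, stopIndex_le_iff hmono]
  exact ⟨fun ⟨t, ht, hts⟩ => ⟨t, (hfeas t hts).1 ht, hts⟩,
    fun ⟨t, ht, hts⟩ => ⟨t, (hfeas t hts).2 ht, hts⟩⟩

end SortedNulls

theorem sum_nullRatio_nullSignVec_mul_le (q : ℝ) (H0 : Finset (Fin m)) (w : Fin m → ℝ) :
    ∑ δ : H0 → Bool, nullRatio q H0 (fun j => nullSignVec H0 δ j * w j) ≤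
      Fintype.card (H0 → Bool) := by
  obtain ⟨ord, hmono⟩ := exists_equiv_fin_monotone fun j : H0 => |w j|
  calc ∑ δ : H0 → Bool, nullRatio q H0 (fun j => nullSignVec H0 δ j * w j)
      = ∑ ε, nullRatio q H0 (withNullSigns w ord ε) :=
        Fintype.sum_equiv (nullSignsEquiv w ord) _ _ fun δ => by
          rw [nullSignVec_mul_eq_withNullSigns]
    _ = ∑ ε, tailRatio ε (stopIndex w ord q ε) := by
        simp only [nullRatio, nullCount_withNullSigns hmono, tailRatio]
    _ ≤ 2 ^ Fintype.card H0 :=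
        sum_tailRatio_stopped_le _ (fun ε => (card_filter_le _ _).trans (by simp))
          (stopIndex_comp_swap_le_iff hmono)
    _ = Fintype.card (H0 → Bool) := by simp

theorem integral_nullRatio_le_one {ν : Measure (Fin m → ℝ)} [IsProbabilityMeasure ν] (q : ℝ)
    (H0 : Finset (Fin m))
    (hν : ∀ δ : H0 → Bool, MeasurePreserving (fun v j => nullSignVec H0 δ j * v j) ν ν) :
    ∫ v, nullRatio q H0 v ∂ν ≤ 1 :=
  integral_le_of_sum_comp_le hν (integrable_nullRatio measurable_id) fun w => by
    simpa using sum_nullRatio_nullSignVec_mul_le q H0 w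

theorem knockoff_mfdr_control_general {Ω : Type*} [MeasurableSpace Ω]
    (μ : Measure Ω) [IsProbabilityMeasure μ]
    (W : Ω → Fin m → ℝ) (hW : Measurable W) (H0 : Finset (Fin m))
    (hsign : ∀ ε : Fin m → ℝ, (∀ j, ε j = 1 ∨ ε j = -1) →
      (∀ j ∉ H0, ε j = 1) →
      μ.map (fun ω => fun j => ε j * W ω j) = μ.map W)
    (q : ℝ) (hq0 : 0 < q) :
    ∫ ω, ((knockoffSelected q (W ω) ∩ H0).card : ℝ) /
        (((knockoffSelected q (W ω)).card : ℝ) + 1 / q) ∂μ ≤ q := by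
  have := Measure.isProbabilityMeasure_map (μ := μ) hW.aemeasurable
  have hflip (δ : H0 → Bool) :
      MeasurePreserving (fun v j => nullSignVec H0 δ j * v j) (μ.map W) (μ.map W) := by
    have hφ : Measurable fun (v : Fin m → ℝ) j => nullSignVec H0 δ j * v j :=
      measurable_pi_lambda _ fun j => (measurable_pi_apply j).const_mul _
    refine ⟨hφ, ?_⟩
    rw [Measure.map_map hφ hW]
    exact hsign _ (nullSignVec_eq_one_or_neg_one δ) fun j => nullSignVec_of_notMem δ
  have hratio : ∫ ω, nullRatio q H0 (W ω) ∂μ ≤ 1 := by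
    rw [← integral_map hW.aemeasurable (measurable_nullRatio q H0).aestronglyMeasurable]
    exact integral_nullRatio_le_one q H0 hflip
  calc ∫ ω, ((knockoffSelected q (W ω) ∩ H0).card : ℝ) /
        (((knockoffSelected q (W ω)).card : ℝ) + 1 / q) ∂μ
      ≤ ∫ ω, q * nullRatio q H0 (W ω) ∂μ :=
        integral_mono_of_nonneg (ae_of_all _ fun ω => div_nonneg (Nat.cast_nonneg _)
            (add_nonneg (Nat.cast_nonneg _) (one_div_nonneg.2 hq0.le)))
          ((integrable_nullRatio hW).const_mul q)
          (ae_of_all _ fun ω => modifiedFDP_le_mul_nullRatio hq0)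
    _ = q * ∫ ω, nullRatio q H0 (W ω) ∂μ := integral_const_mul _ _
    _ ≤ q := mul_le_of_le_one_right hq0.le hratio

/-- Modified FDR control for the knockoff filter: under the i.i.d. symmetric null
sign condition (flipping signs of any subset of null coordinates leaves the joint
law invariant), the expected ratio `#(Ŝ ∩ H₀) / (|Ŝ| + 1/q)` is at most `q`. -/
theorem knockoff_mfdr_control {Ω : Type*} [MeasurableSpace Ω]
    (μ : Measure Ω) [IsProbabilityMeasure μ]
    (W : Ω → Fin m → ℝ) (hW : Measurable W) (H0 : Finset (Fin m))
    (hsign : ∀ ε : Fin m → ℝ, (∀ j, ε j = 1 ∨ ε j = -1) →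
      (∀ j ∉ H0, ε j = 1) →
      μ.map (fun ω => fun j => ε j * W ω j) = μ.map W)
    (q : ℝ) (hq0 : 0 < q) (hq1 : q < 1) :
    ∫ ω, ((knockoffSelected q (W ω) ∩ H0).card : ℝ) /
        (((knockoffSelected q (W ω)).card : ℝ) + 1 / q) ∂μ ≤ q :=
  knockoff_mfdr_control_general μ W hW H0 hsign q hq0
end

section
/- Leave-one-out inequality for robust knockoffs: Suppose for each null j and ε ≥ 0, conditionally on the event {KL̂_j ≤ ε} ∩ {magnitudes and other data}, ℙ(W_j > 0 | |W_j|, W_{-j}) ≤ e^ε · ℙ(W_j < 0 | |W_j|, W_{-j}). Then for the knockoff+ selection set Ŝ with threshold at level q, E[ #{j ∈ Ŝ ∩ H_0 : KL̂_j ≤ ε} / max(1, |Ŝ|) ] ≤ q e^ε. -/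
open MeasureTheory ProbabilityTheory Finset

variable {m : ℕ}

/-- The σ-algebra generated by `|W_j|` and `W_{-j}` (the leave-one-out data). -/
noncomputable def looSigma {Ω : Type*} [MeasurableSpace Ω]
    (W : Ω → Fin m → ℝ) (j : Fin m) : MeasurableSpace Ω :=
  MeasurableSpace.comap
    (fun ω => (|W ω j|, fun k : Fin m => if k = j then (0 : ℝ) else W ω k))
    inferInstance

namespace RobustKO

/-- number of coordinates `≤ -t` -/
noncomputable def negCt (v : Fin m → ℝ) (t : ℝ) : ℕ := (univ.filter fun k => v k ≤ -t).card
/-- number of coordinates `≥ t` -/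
noncomputable def posCt (v : Fin m → ℝ) (t : ℝ) : ℕ := (univ.filter fun k => t ≤ v k).card

/-- the feasibility predicate -/
def fpred (q : ℝ) (v : Fin m → ℝ) (t : ℝ) : Prop :=
  t ≠ 0 ∧ (1 + (negCt v t : ℝ)) ≤ q * max 1 ((posCt v t : ℝ))

lemma mem_feas {q t : ℝ} {v : Fin m → ℝ} :
    t ∈ knockoffPlusFeasible q v ↔ (∃ i, |v i| = t) ∧ fpred q v t := by
  simp [knockoffPlusFeasible, fpred, negCt, posCt, Finset.mem_filter, Finset.mem_image]

lemma pos_of_mem_feas {q t : ℝ} {v : Fin m → ℝ} (h : t ∈ knockoffPlusFeasible q v) : 0 < t := by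
  rcases mem_feas.1 h with ⟨⟨i, hi⟩, ht0, -⟩
  exact lt_of_le_of_ne (hi ▸ abs_nonneg _) (Ne.symm ht0)

/-- argmin (with least-index tie-breaking) condition -/
def amc (q : ℝ) (v : Fin m → ℝ) (i : Fin m) : Prop :=
  fpred q v |v i| ∧ (∀ k, fpred q v |v k| → |v i| ≤ |v k|) ∧
    ∀ k, k < i → ¬(fpred q v |v k| ∧ |v k| = |v i|)

open scoped Classical in
/-- a measurable-friendly formula for the minimum feasible threshold -/
noncomputable def Tmin (q : ℝ) (v : Fin m → ℝ) : ℝ := ∑ i, if amc q v i then |v i| else 0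

lemma feas_nonempty_iff {q : ℝ} {v : Fin m → ℝ} :
    (knockoffPlusFeasible q v).Nonempty ↔ ∃ i, fpred q v |v i| := by
  constructor
  · rintro ⟨t, ht⟩
    rcases mem_feas.1 ht with ⟨⟨i, hi⟩, hp⟩
    exact ⟨i, hi ▸ hp⟩
  · rintro ⟨i, hi⟩
    exact ⟨|v i|, mem_feas.2 ⟨⟨i, rfl⟩, hi⟩⟩

lemma Tmin_spec {q : ℝ} {v : Fin m → ℝ} (h : (knockoffPlusFeasible q v).Nonempty) :
    Tmin q v = (knockoffPlusFeasible q v).min' h := by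
  classical
  set t₀ := (knockoffPlusFeasible q v).min' h with ht₀
  have ht₀mem : t₀ ∈ knockoffPlusFeasible q v := Finset.min'_mem _ h
  obtain ⟨⟨i', hi'⟩, hp0⟩ := mem_feas.1 ht₀mem
  have hSa : (univ.filter fun i => fpred q v |v i| ∧ |v i| = t₀).Nonempty :=
    ⟨i', by
      simp only [Finset.mem_filter, Finset.mem_univ, true_and]
      exact ⟨by rw [hi']; exact hp0, hi'⟩⟩
  set i₀ := (univ.filter fun i => fpred q v |v i| ∧ |v i| = t₀).min' hSa with hi₀def
  have hi₀mem := Finset.min'_mem _ hSa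
  rw [Finset.mem_filter] at hi₀mem
  have hmin : ∀ k, fpred q v |v k| → t₀ ≤ |v k| := by
    intro k hk
    exact Finset.min'_le _ _ (mem_feas.2 ⟨⟨k, rfl⟩, hk⟩)
  have hamc : amc q v i₀ := by
    refine ⟨hi₀mem.2.2 ▸ hi₀mem.2.1, fun k hk => hi₀mem.2.2 ▸ hmin k hk, fun k hk hcon => ?_⟩
    have : k ∈ univ.filter fun i => fpred q v |v i| ∧ |v i| = t₀ := by
      simp only [Finset.mem_filter, Finset.mem_univ, true_and]
      exact ⟨hcon.1, hcon.2.trans hi₀mem.2.2⟩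
    exact absurd (Finset.min'_le _ _ this) (not_le.2 hk)
  have huniq : ∀ i, amc q v i → i = i₀ := by
    intro i hi
    have hival : |v i| = t₀ := le_antisymm (hi.2.1 i' (hi' ▸ hp0)|>.trans hi'.le) (hmin i hi.1)
    have himem : i ∈ univ.filter fun i => fpred q v |v i| ∧ |v i| = t₀ := by
      simp only [Finset.mem_filter, Finset.mem_univ, true_and]; exact ⟨hi.1, hival⟩
    rcases lt_trichotomy i i₀ with hlt | heq | hgt
    · exact absurd (Finset.min'_le _ _ himem) (not_le.2 hlt)
    · exact heq
    · exact absurd ⟨hi₀mem.2.1, hi₀mem.2.2.trans hival.symm⟩ (hi.2.2 i₀ hgt)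
  rw [Tmin, Finset.sum_eq_single i₀]
  · rw [if_pos hamc, hi₀mem.2.2]
  · intro i _ hne
    rw [if_neg fun hc => hne (huniq i hc)]
  · intro hcon; exact absurd (Finset.mem_univ i₀) hcon

open scoped Classical in
/-- The leave-one-out weight: the knockoff+ quantity computed after forcing
coordinate `j` to be positive. -/
noncomputable def looH (q : ℝ) (j : Fin m) (w : Fin m → ℝ) : ℝ :=
  if (knockoffPlusFeasible q (Function.update w j |w j|)).Nonempty ∧
      Tmin q (Function.update w j |w j|) ≤ |w j| then
    1 / (1 + ((univ.filter fun k =>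
        k ≠ j ∧ w k ≤ -(Tmin q (Function.update w j |w j|))).card : ℝ))
  else 0

lemma looH_nonneg (q : ℝ) (j : Fin m) (w : Fin m → ℝ) : 0 ≤ looH q j w := by
  rw [looH]; split
  · positivity
  · exact le_rfl

lemma looH_le_one (q : ℝ) (j : Fin m) (w : Fin m → ℝ) : looH q j w ≤ 1 := by
  rw [looH]; split
  · rw [div_le_one (by positivity)]
    have : (0:ℝ) ≤ ((univ.filter fun k =>
        k ≠ j ∧ w k ≤ -(Tmin q (Function.update w j |w j|))).card : ℝ) := Nat.cast_nonneg _
    linarith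
  · exact zero_le_one

lemma abs_update (w : Fin m → ℝ) (j k : Fin m) :
    |Function.update w j |w j| k| = |w k| := by
  rcases eq_or_ne k j with rfl | hk
  · simp
  · simp [Function.update_of_ne hk]

lemma update_apply_ne (w : Fin m → ℝ) {j k : Fin m} (hk : k ≠ j) :
    Function.update w j |w j| k = w k := Function.update_of_ne hk _ _

/-- counting relations between `w` and its `j`-positivized version -/
lemma negCt_update_of_le {w : Fin m → ℝ} {j : Fin m} {t : ℝ} (ht : 0 < t) (hle : w j ≤ -t) :
    negCt w t = negCt (Function.update w j |w j|) t + 1 := by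
  classical
  have hnot : j ∉ univ.filter fun k => Function.update w j |w j| k ≤ -t := by
    simp only [Finset.mem_filter, Finset.mem_univ, true_and, Function.update_self]
    intro h; have := (abs_nonneg (w j)).trans h; linarith
  have hins : (univ.filter fun k => w k ≤ -t)
      = insert j (univ.filter fun k => Function.update w j |w j| k ≤ -t) := by
    ext k
    simp only [Finset.mem_filter, Finset.mem_univ, true_and, Finset.mem_insert]
    rcases eq_or_ne k j with rfl | hk
    · simp [hle]
    · simp [hk, update_apply_ne w hk]
  rw [negCt, negCt, hins, Finset.card_insert_of_notMem hnot, add_comm]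

lemma negCt_update_of_not_le {w : Fin m → ℝ} {j : Fin m} {t : ℝ} (ht : 0 < t)
    (hle : ¬ w j ≤ -t) : negCt (Function.update w j |w j|) t = negCt w t := by
  classical
  unfold negCt
  congr 1
  ext k
  simp only [Finset.mem_filter, Finset.mem_univ, true_and]
  rcases eq_or_ne k j with rfl | hk
  · simp only [Function.update_self]
    constructor
    · intro h; have := (abs_nonneg (w k)).trans h; linarith
    · intro h; exact absurd h hle
  · rw [update_apply_ne w hk]

lemma posCt_update_of_le {w : Fin m → ℝ} {j : Fin m} {t : ℝ} (ht : 0 < t) (hwj : w j < 0)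
    (hta : t ≤ |w j|) :
    posCt (Function.update w j |w j|) t = posCt w t + 1 := by
  classical
  have hnot : j ∉ univ.filter fun k => t ≤ w k := by
    simp only [Finset.mem_filter, Finset.mem_univ, true_and]
    intro h; linarith
  have hins : (univ.filter fun k => t ≤ Function.update w j |w j| k)
      = insert j (univ.filter fun k => t ≤ w k) := by
    ext k
    simp only [Finset.mem_filter, Finset.mem_univ, true_and, Finset.mem_insert]
    rcases eq_or_ne k j with rfl | hk
    · simp [hta]
    · simp [hk, update_apply_ne w hk]
  rw [posCt, posCt, hins, Finset.card_insert_of_notMem hnot]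

lemma posCt_update_of_not_le {w : Fin m → ℝ} {j : Fin m} {t : ℝ} (ht : 0 < t) (hwj : w j < 0)
    (hta : ¬ t ≤ |w j|) :
    posCt (Function.update w j |w j|) t = posCt w t := by
  classical
  unfold posCt
  congr 1
  ext k
  simp only [Finset.mem_filter, Finset.mem_univ, true_and]
  rcases eq_or_ne k j with rfl | hk
  · simp only [Function.update_self]
    constructor
    · intro h; exact absurd h hta
    · intro h; linarith
  · rw [update_apply_ne w hk]

/-- the one-sided feasibility predicate for `w` itself -/
def pred1 (q : ℝ) (w : Fin m → ℝ) (t : ℝ) : Prop :=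
  t ≠ 0 ∧ (negCt w t : ℝ) ≤ q * max 1 ((posCt w t : ℝ) + 1)

lemma fpred_update_iff_of_le {q : ℝ} {w : Fin m → ℝ} {j : Fin m} {t : ℝ}
    (hwj : w j < 0) (ht : 0 < t) (hta : t ≤ |w j|) :
    fpred q (Function.update w j |w j|) t ↔ pred1 q w t := by
  have habs : |w j| = -w j := abs_of_neg hwj
  have hle : w j ≤ -t := by rw [habs] at hta; linarith
  have h1 : (negCt w t : ℝ) = (negCt (Function.update w j |w j|) t : ℝ) + 1 := by
    rw [negCt_update_of_le ht hle]; push_cast; ring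
  have h2 : (posCt (Function.update w j |w j|) t : ℝ) = (posCt w t : ℝ) + 1 := by
    rw [posCt_update_of_le ht hwj hta]; push_cast; ring
  unfold fpred pred1
  rw [h1, h2]
  constructor
  · rintro ⟨h0, h⟩; exact ⟨h0, by linarith⟩
  · rintro ⟨h0, h⟩; exact ⟨h0, by linarith⟩

lemma fpred_update_iff_of_not_le {q : ℝ} {w : Fin m → ℝ} {j : Fin m} {t : ℝ}
    (hwj : w j < 0) (ht : 0 < t) (hta : ¬ t ≤ |w j|) :
    fpred q (Function.update w j |w j|) t ↔ fpred q w t := by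
  have habs : |w j| = -w j := abs_of_neg hwj
  have hle : ¬ w j ≤ -t := by rw [habs] at hta; intro h; exact hta (by linarith)
  unfold fpred
  rw [negCt_update_of_not_le ht hle, posCt_update_of_not_le ht hwj hta]

open scoped Classical in
/-- the common candidate threshold set -/
noncomputable def lam (q : ℝ) (w : Fin m → ℝ) : Finset ℝ :=
  (univ.image fun k => |w k|).filter (pred1 q w)

lemma mem_lam {q t : ℝ} {w : Fin m → ℝ} :
    t ∈ lam q w ↔ (∃ i, |w i| = t) ∧ pred1 q w t := by
  classical
  simp [lam, Finset.mem_filter, Finset.mem_image]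

lemma lam_pos {q t : ℝ} {w : Fin m → ℝ} (h : t ∈ lam q w) : 0 < t := by
  rcases mem_lam.1 h with ⟨⟨i, hi⟩, ht0, -⟩
  exact lt_of_le_of_ne (hi ▸ abs_nonneg _) (Ne.symm ht0)

lemma mem_feas_update_iff {q t : ℝ} {w : Fin m → ℝ} {j : Fin m} (hwj : w j < 0) :
    t ∈ knockoffPlusFeasible q (Function.update w j |w j|) ↔
      (∃ i, |w i| = t) ∧ fpred q (Function.update w j |w j|) t := by
  rw [mem_feas]
  constructor
  · rintro ⟨⟨i, hi⟩, hp⟩; exact ⟨⟨i, (abs_update w j i).symm.trans hi⟩, hp⟩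
  · rintro ⟨⟨i, hi⟩, hp⟩; exact ⟨⟨i, (abs_update w j i).trans hi⟩, hp⟩
/-- Key lemma A: if `w j < 0` and the common threshold `τ = min (lam q w)` satisfies
`τ ≤ |w j|`, then the leave-one-out weight equals `1 / negCt w τ`. -/
lemma looH_of_contrib {q : ℝ} {w : Fin m → ℝ} {j : Fin m} (hwj : w j < 0)
    (hΛ : (lam q w).Nonempty) (hτ : (lam q w).min' hΛ ≤ |w j|) :
    looH q j w = 1 / ((negCt w ((lam q w).min' hΛ) : ℝ)) := by
  classical
  set τ := (lam q w).min' hΛ with hτdef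
  have hτmem : τ ∈ lam q w := Finset.min'_mem _ _
  have hτpos : 0 < τ := lam_pos hτmem
  obtain ⟨⟨i, hi⟩, hp1⟩ := mem_lam.1 hτmem
  set v := Function.update w j |w j| with hv
  have hτfeas : τ ∈ knockoffPlusFeasible q v :=
    (mem_feas_update_iff hwj).2 ⟨⟨i, hi⟩, (fpred_update_iff_of_le hwj hτpos hτ).2 hp1⟩
  have hvne : (knockoffPlusFeasible q v).Nonempty := ⟨τ, hτfeas⟩
  have hminτ : (knockoffPlusFeasible q v).min' hvne = τ := by
    refine le_antisymm (Finset.min'_le _ _ hτfeas) ?_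
    set t' := (knockoffPlusFeasible q v).min' hvne with ht'
    have ht'mem : t' ∈ knockoffPlusFeasible q v := Finset.min'_mem _ _
    have ht'pos : 0 < t' := pos_of_mem_feas ht'mem
    have ht'le : t' ≤ |w j| := le_trans (Finset.min'_le _ _ hτfeas) hτ
    obtain ⟨⟨i', hi'⟩, hp'⟩ := (mem_feas_update_iff hwj).1 ht'mem
    have : t' ∈ lam q w :=
      mem_lam.2 ⟨⟨i', hi'⟩, (fpred_update_iff_of_le hwj ht'pos ht'le).1 hp'⟩
    exact Finset.min'_le _ _ this
  have hTmin : Tmin q v = τ := (Tmin_spec hvne).trans hminτ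
  have hwjτ : w j ≤ -τ := by
    have : |w j| = -w j := abs_of_neg hwj
    rw [this] at hτ; linarith
  have hcount : negCt w τ = (univ.filter fun k => k ≠ j ∧ w k ≤ -τ).card + 1 := by
    have hnot : j ∉ univ.filter fun k => k ≠ j ∧ w k ≤ -τ := by simp
    have hins : (univ.filter fun k => w k ≤ -τ)
        = insert j (univ.filter fun k => k ≠ j ∧ w k ≤ -τ) := by
      ext k
      simp only [Finset.mem_filter, Finset.mem_univ, true_and, Finset.mem_insert]
      rcases eq_or_ne k j with rfl | hk
      · simp [hwjτ]
      · simp [hk]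
    rw [negCt, hins, Finset.card_insert_of_notMem hnot, add_comm]
  rw [looH]
  rw [if_pos ⟨hvne, by rw [hTmin]; exact hτ⟩]
  rw [hTmin, hcount]
  push_cast
  ring_nf

/-- Key lemma B: if `w j < 0` and `|w j|` is below the common threshold
(or there is none), the leave-one-out weight vanishes. -/
lemma looH_of_not_contrib {q : ℝ} {w : Fin m → ℝ} {j : Fin m} (hwj : w j < 0)
    (h : ∀ hΛ : (lam q w).Nonempty, |w j| < (lam q w).min' hΛ) :
    looH q j w = 0 := by
  classical
  rw [looH, if_neg]
  rintro ⟨hvne, hT⟩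
  set v := Function.update w j |w j| with hv
  set t' := (knockoffPlusFeasible q v).min' hvne with ht'
  have ht'mem : t' ∈ knockoffPlusFeasible q v := Finset.min'_mem _ _
  have ht'pos : 0 < t' := pos_of_mem_feas ht'mem
  rw [← Tmin_spec hvne] at ht'
  have ht'le : t' ≤ |w j| := ht' ▸ hT
  obtain ⟨⟨i', hi'⟩, hp'⟩ := (mem_feas_update_iff hwj).1 ht'mem
  have hmem : t' ∈ lam q w :=
    mem_lam.2 ⟨⟨i', hi'⟩, (fpred_update_iff_of_le hwj ht'pos ht'le).1 hp'⟩
  have hΛ : (lam q w).Nonempty := ⟨t', hmem⟩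
  exact absurd (le_trans (Finset.min'_le _ _ hmem) ht'le) (not_le.2 (h hΛ))

/-- The leave-one-out sum over negative coordinates is at most one. -/
lemma claim_sum (q : ℝ) (w : Fin m → ℝ) :
    ∑ j, (if w j < 0 then looH q j w else 0) ≤ 1 := by
  classical
  by_cases hΛ : (lam q w).Nonempty
  · set τ := (lam q w).min' hΛ with hτdef
    have hτpos : 0 < τ := lam_pos (Finset.min'_mem _ _)
    have hterm : ∀ j, (if w j < 0 then looH q j w else 0)
        = if w j ≤ -τ then 1 / ((negCt w τ : ℝ)) else 0 := by
      intro j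
      by_cases hj : w j ≤ -τ
      · have hwj : w j < 0 := lt_of_le_of_lt hj (by linarith)
        have hta : τ ≤ |w j| := by rw [abs_of_neg hwj]; linarith
        rw [if_pos hwj, if_pos hj, looH_of_contrib hwj hΛ hta]
      · rw [if_neg hj]
        by_cases hwj : w j < 0
        · rw [if_pos hwj]
          refine looH_of_not_contrib hwj fun hΛ' => ?_
          rw [abs_of_neg hwj]
          push_neg at hj
          have : (lam q w).min' hΛ' = τ := rfl
          rw [this]; linarith
        · rw [if_neg hwj]
    calc ∑ j, (if w j < 0 then looH q j w else 0)
        = ∑ j, (if w j ≤ -τ then 1 / ((negCt w τ : ℝ)) else 0) :=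
          Finset.sum_congr rfl fun j _ => hterm j
      _ = ((negCt w τ : ℝ)) * (1 / (negCt w τ : ℝ)) := by
          rw [← Finset.sum_filter]
          rw [Finset.sum_const]
          rw [nsmul_eq_mul]
          rfl
      _ ≤ 1 := by
          rcases eq_or_ne (negCt w τ) 0 with h0 | h0
          · rw [h0]; norm_num
          · rw [mul_one_div, div_self (by exact_mod_cast h0)]
  · have hterm : ∀ j, (if w j < 0 then looH q j w else 0) = 0 := by
      intro j
      by_cases hwj : w j < 0
      · rw [if_pos hwj, looH_of_not_contrib hwj fun hΛ' => absurd hΛ' hΛ]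
      · rw [if_neg hwj]
    rw [Finset.sum_congr rfl fun j _ => hterm j, Finset.sum_const, smul_zero]
    exact zero_le_one
/-- For a selected coordinate, the knockoff+ denominator is controlled by the
leave-one-out weight. -/
lemma selected_bound {q : ℝ} {w : Fin m → ℝ} (hne : (knockoffPlusFeasible q w).Nonempty)
    {j : Fin m} (hj : (knockoffPlusFeasible q w).min' hne ≤ w j) :
    0 < w j ∧
      1 / max 1 ((knockoffPlusSelected q w).card : ℝ) ≤ q * looH q j w := by
  classical
  set T := (knockoffPlusFeasible q w).min' hne with hT
  have hTmem : T ∈ knockoffPlusFeasible q w := Finset.min'_mem _ _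
  have hTpos : 0 < T := pos_of_mem_feas hTmem
  have hwj : 0 < w j := lt_of_lt_of_le hTpos hj
  have habs : |w j| = w j := abs_of_pos hwj
  have hupd : Function.update w j |w j| = w := by rw [habs]; exact Function.update_eq_self j w
  have hcount : (univ.filter fun k => k ≠ j ∧ w k ≤ -(T : ℝ)) = univ.filter fun k => w k ≤ -T := by
    ext k
    simp only [Finset.mem_filter, Finset.mem_univ, true_and]
    constructor
    · rintro ⟨-, h⟩; exact h
    · intro h
      refine ⟨fun hkj => ?_, h⟩
      subst hkj
      linarith
  have hTval : Tmin q w = T := Tmin_spec hne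
  have hlooH : looH q j w = 1 / (1 + (negCt w T : ℝ)) := by
    rw [looH, hupd, hTval, habs, if_pos ⟨hne, hj⟩, hcount]
    rfl
  have hselcard : (knockoffPlusSelected q w).card = posCt w T := by
    rw [knockoffPlusSelected, dif_pos hne]; rfl
  have hfeas := (mem_feas.1 hTmem).2.2
  have hmaxpos : (0:ℝ) < max 1 ((posCt w T : ℝ)) := lt_of_lt_of_le zero_lt_one (le_max_left _ _)
  have hDpos : (0:ℝ) < 1 + (negCt w T : ℝ) := by positivity
  refine ⟨hwj, ?_⟩
  rw [hlooH, hselcard, mul_one_div, div_le_div_iff₀ hmaxpos hDpos, one_mul]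
  exact hfeas

/-- Pathwise bound: the (filtered) FDP is at most `q` times the sum of
leave-one-out weights over positive filtered coordinates. -/
lemma fdp_le (q : ℝ) (hq : 0 ≤ q) (w : Fin m → ℝ) (S0 : Finset (Fin m))
    (p : Fin m → Prop) [DecidablePred p] :
    (((knockoffPlusSelected q w ∩ S0).filter p).card : ℝ) /
        max 1 ((knockoffPlusSelected q w).card : ℝ)
      ≤ q * ∑ j ∈ S0, (if 0 < w j ∧ p j then looH q j w else 0) := by
  classical
  have hRHS : 0 ≤ ∑ j ∈ S0, (if 0 < w j ∧ p j then looH q j w else 0) :=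
    Finset.sum_nonneg fun j _ => by
      split
      · exact looH_nonneg _ _ _
      · exact le_rfl
  by_cases hne : (knockoffPlusFeasible q w).Nonempty
  · set T := (knockoffPlusFeasible q w).min' hne with hT
    have hsel : knockoffPlusSelected q w = univ.filter fun j => T ≤ w j := by
      rw [knockoffPlusSelected, dif_pos hne]
    have hset : (knockoffPlusSelected q w ∩ S0).filter p
        = S0.filter fun j => T ≤ w j ∧ p j := by
      ext j
      simp only [Finset.mem_filter, Finset.mem_inter, hsel, Finset.mem_univ, true_and]
      tauto
    have hcard : ((((knockoffPlusSelected q w) ∩ S0).filter p).card : ℝ)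
        = ∑ j ∈ S0, (if T ≤ w j ∧ p j then (1:ℝ) else 0) := by
      rw [hset, Finset.card_filter]
      push_cast
      exact Finset.sum_congr rfl fun j _ => by split <;> norm_num
    rw [hcard, Finset.sum_div]
    rw [Finset.mul_sum]
    refine Finset.sum_le_sum fun j hjS => ?_
    by_cases hj : T ≤ w j ∧ p j
    · obtain ⟨hwj, hbound⟩ := selected_bound hne hj.1
      rw [if_pos hj, if_pos ⟨hwj, hj.2⟩]
      exact hbound
    · rw [if_neg hj, zero_div]
      refine mul_nonneg hq ?_
      split
      · exact looH_nonneg _ _ _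
      · exact le_rfl
  · rw [knockoffPlusSelected, dif_neg hne]
    simp only [Finset.empty_inter, Finset.filter_empty, Finset.card_empty, Nat.cast_zero,
      zero_div]
    exact mul_nonneg hq hRHS
section Meas

variable {α : Type*} [MeasurableSpace α]

lemma meas_card (P : Fin m → α → Prop) [∀ a k, Decidable (P k a)]
    (hP : ∀ k, MeasurableSet {a | P k a}) :
    Measurable fun a => (((univ.filter fun k => P k a).card : ℕ) : ℝ) := by
  have h : (fun a => (((univ.filter fun k => P k a).card : ℕ) : ℝ))
      = fun a => ∑ k, if P k a then (1:ℝ) else 0 := by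
    funext a
    rw [Finset.card_filter, Nat.cast_sum]
    exact Finset.sum_congr rfl fun k _ => by split <;> norm_num
  rw [h]
  exact Finset.measurable_sum _ fun k _ => Measurable.ite (hP k) measurable_const measurable_const

lemma meas_negCt (t : α → ℝ) (ht : Measurable t) :
    Measurable fun v : α × (Fin m → ℝ) => 0 := measurable_const

end Meas

section Meas2

lemma meas_negCt_comp {α : Type*} [MeasurableSpace α] (V : α → (Fin m → ℝ)) (hV : Measurable V)
    (t : α → ℝ) (ht : Measurable t) :
    Measurable fun a => ((negCt (V a) (t a) : ℕ) : ℝ) := by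
  refine meas_card (fun k a => V a k ≤ -(t a)) fun k => ?_
  exact measurableSet_le ((measurable_pi_apply k).comp hV) ht.neg

lemma meas_posCt_comp {α : Type*} [MeasurableSpace α] (V : α → (Fin m → ℝ)) (hV : Measurable V)
    (t : α → ℝ) (ht : Measurable t) :
    Measurable fun a => ((posCt (V a) (t a) : ℕ) : ℝ) := by
  refine meas_card (fun k a => t a ≤ V a k) fun k => ?_
  exact measurableSet_le ht ((measurable_pi_apply k).comp hV)

lemma measSet_fpred (q : ℝ) (i : Fin m) :
    MeasurableSet {v : Fin m → ℝ | fpred q v |v i|} := by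
  have habs : Measurable fun v : Fin m → ℝ => |v i| := (measurable_pi_apply i).abs
  have h1 : MeasurableSet {v : Fin m → ℝ | |v i| ≠ 0} := by
    exact (measurableSet_eq_fun habs measurable_const).compl
  have h2 : MeasurableSet {v : Fin m → ℝ |
      (1 + (negCt v |v i| : ℝ)) ≤ q * max 1 ((posCt v |v i| : ℝ))} := by
    refine measurableSet_le (measurable_const.add ?_) (measurable_const.mul
      (measurable_const.max ?_))
    · exact meas_negCt_comp id measurable_id _ habs
    · exact meas_posCt_comp id measurable_id _ habs
  exact h1.inter h2

lemma measSet_amc (q : ℝ) (i : Fin m) :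
    MeasurableSet {v : Fin m → ℝ | amc q v i} := by
  have habs : ∀ k, Measurable fun v : Fin m → ℝ => |v k| := fun k =>
    (measurable_pi_apply k).abs
  have h2 : MeasurableSet {v : Fin m → ℝ | ∀ k, fpred q v |v k| → |v i| ≤ |v k|} := by
    have : {v : Fin m → ℝ | ∀ k, fpred q v |v k| → |v i| ≤ |v k|}
        = ⋂ k, ({v : Fin m → ℝ | fpred q v |v k|}ᶜ ∪ {v | |v i| ≤ |v k|}) := by
      ext v
      simp only [Set.mem_iInter, Set.mem_setOf_eq, Set.mem_union, Set.mem_compl_iff]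
      exact forall_congr' fun k => imp_iff_not_or
    rw [this]
    exact MeasurableSet.iInter fun k =>
      (measSet_fpred q k).compl.union (measurableSet_le (habs i) (habs k))
  have h3 : MeasurableSet {v : Fin m → ℝ |
      ∀ k, k < i → ¬(fpred q v |v k| ∧ |v k| = |v i|)} := by
    have : {v : Fin m → ℝ | ∀ k, k < i → ¬(fpred q v |v k| ∧ |v k| = |v i|)}
        = ⋂ k, ⋂ (_ : k < i), ({v : Fin m → ℝ | fpred q v |v k|}
            ∩ {v | |v k| = |v i|})ᶜ := by
      ext v
      simp only [Set.mem_iInter, Set.mem_setOf_eq, Set.mem_compl_iff, Set.mem_inter_iff]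
    rw [this]
    exact MeasurableSet.iInter fun k => MeasurableSet.iInter fun _ =>
      ((measSet_fpred q k).inter (measurableSet_eq_fun (habs k) (habs i))).compl
  exact (measSet_fpred q i).inter (h2.inter h3)

lemma meas_Tmin (q : ℝ) : Measurable (Tmin q : (Fin m → ℝ) → ℝ) := by
  unfold Tmin
  exact Finset.measurable_sum _ fun i _ =>
    Measurable.ite (measSet_amc q i) ((measurable_pi_apply i).abs) measurable_const

lemma meas_upd (j : Fin m) :
    Measurable fun w : Fin m → ℝ => Function.update w j |w j| := by
  refine measurable_pi_lambda _ fun k => ?_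
  rcases eq_or_ne k j with rfl | hk
  · simp only [Function.update_self]
    exact (measurable_pi_apply k).abs
  · simp only [Function.update_of_ne hk]
    exact measurable_pi_apply k

lemma measSet_feas_ne (q : ℝ) (j : Fin m) :
    MeasurableSet {w : Fin m → ℝ |
      (knockoffPlusFeasible q (Function.update w j |w j|)).Nonempty} := by
  have : {w : Fin m → ℝ | (knockoffPlusFeasible q (Function.update w j |w j|)).Nonempty}
      = ⋃ i, (fun w : Fin m → ℝ => Function.update w j |w j|) ⁻¹'
          {v : Fin m → ℝ | fpred q v |v i|} := by
    ext w
    simp only [Set.mem_iUnion, Set.mem_preimage, Set.mem_setOf_eq, feas_nonempty_iff]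
  rw [this]
  exact MeasurableSet.iUnion fun i => (meas_upd j) (measSet_fpred q i)

lemma meas_looH (q : ℝ) (j : Fin m) : Measurable (looH q j : (Fin m → ℝ) → ℝ) := by
  unfold looH
  have hT : Measurable fun w : Fin m → ℝ => Tmin q (Function.update w j |w j|) :=
    (meas_Tmin q).comp (meas_upd j)
  refine Measurable.ite ?_ ?_ measurable_const
  · refine (measSet_feas_ne q j).inter ?_
    exact measurableSet_le hT ((measurable_pi_apply j).abs)
  · refine measurable_const.div (measurable_const.add ?_)
    refine meas_card (fun k w => k ≠ j ∧ w k ≤ -(Tmin q (Function.update w j |w j|)))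
      fun k => ?_
    rcases eq_or_ne k j with rfl | hk
    · have h0 : {w : Fin m → ℝ | k ≠ k ∧ w k ≤ -(Tmin q (Function.update w k |w k|))}
          = (∅ : Set (Fin m → ℝ)) := by
        ext w; simp
      rw [h0]; exact MeasurableSet.empty
    · have heq : {w : Fin m → ℝ | k ≠ j ∧ w k ≤ -(Tmin q (Function.update w j |w j|))}
          = {w : Fin m → ℝ | w k ≤ -(Tmin q (Function.update w j |w j|))} := by
        ext w; simp [hk]
      rw [heq]
      exact measurableSet_le (measurable_pi_apply k) hT.neg

end Meas2
section Loo

variable {Ω : Type*} [MeasurableSpace Ω]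

lemma looH_congr {q : ℝ} {j : Fin m} {w w' : Fin m → ℝ}
    (h1 : |w' j| = |w j|) (h2 : ∀ k, k ≠ j → w' k = w k) :
    looH q j w' = looH q j w := by
  have hupd : Function.update w' j |w' j| = Function.update w j |w j| := by
    funext k
    rcases eq_or_ne k j with rfl | hk
    · simp [h1]
    · simp [Function.update_of_ne hk, h2 k hk]
  have hfil : ∀ t : ℝ, (univ.filter fun k => k ≠ j ∧ w' k ≤ -t)
      = univ.filter fun k => k ≠ j ∧ w k ≤ -t := by
    intro t
    ext k
    simp only [Finset.mem_filter, Finset.mem_univ, true_and, and_congr_right_iff]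
    intro hk
    rw [h2 k hk]
  rw [looH, looH, hupd, h1, hfil]

/-- the generating map of the leave-one-out σ-algebra -/
def pmap (W : Ω → Fin m → ℝ) (j : Fin m) : Ω → ℝ × (Fin m → ℝ) :=
  fun ω => (|W ω j|, fun k : Fin m => if k = j then (0 : ℝ) else W ω k)

lemma looSigma_eq (W : Ω → Fin m → ℝ) (j : Fin m) :
    looSigma W j = MeasurableSpace.comap (pmap W j) inferInstance := rfl

lemma meas_pmap {W : Ω → Fin m → ℝ} (hW : Measurable W) (j : Fin m) :
    Measurable (pmap W j) := by
  have h1 : Measurable fun ω => |W ω j| := ((measurable_pi_apply j).comp hW).abs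
  have h2 : Measurable fun ω => (fun k : Fin m => if k = j then (0:ℝ) else W ω k) := by
    refine measurable_pi_lambda _ fun k => ?_
    by_cases hk : k = j
    · simp only [if_pos hk]; exact measurable_const
    · simp only [if_neg hk]; exact (measurable_pi_apply k).comp hW
  exact h1.prodMk h2

lemma looSigma_le {W : Ω → Fin m → ℝ} (hW : Measurable W) (j : Fin m) :
    looSigma W j ≤ ‹MeasurableSpace Ω› := by
  rw [looSigma_eq]
  exact (meas_pmap hW j).comap_le

lemma meas_pmap_loo (W : Ω → Fin m → ℝ) (j : Fin m) :
    Measurable[looSigma W j] (pmap W j) := by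
  rw [looSigma_eq]
  exact Measurable.of_comap_le le_rfl

lemma meas_looH_loo {W : Ω → Fin m → ℝ} (hW : Measurable W) (q : ℝ) (j : Fin m) :
    Measurable[looSigma W j] fun ω => looH q j (W ω) := by
  have hfact : (fun ω => looH q j (W ω))
      = (fun x : ℝ × (Fin m → ℝ) => looH q j (Function.update x.2 j x.1)) ∘ (pmap W j) := by
    funext ω
    simp only [Function.comp_apply, pmap]
    refine (looH_congr ?_ ?_).symm
    · simp [abs_abs]
    · intro k hk
      simp [Function.update_of_ne hk, if_neg hk]
  rw [hfact]
  refine Measurable.comp ?_ (meas_pmap_loo W j)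
  refine (meas_looH q j).comp ?_
  refine measurable_pi_lambda _ fun k => ?_
  rcases eq_or_ne k j with rfl | hk
  · simp only [Function.update_self]; exact measurable_fst
  · simp only [Function.update_of_ne hk]; exact (measurable_pi_apply k).comp measurable_snd

end Loo

section Star

variable {Ω : Type*} [MeasurableSpace Ω] (μ : Measure Ω) [IsProbabilityMeasure μ]

/-- The key one-coordinate integral inequality derived from the conditional
odds bound. -/
lemma star_bound (W : Ω → Fin m → ℝ) (hW : Measurable W)
    (KL : Fin m → Ω → ℝ) (hKL : ∀ j, Measurable[looSigma W j] (KL j))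
    (ε : ℝ) (j : Fin m)
    (hcondj : ∀ᵐ ω ∂μ, KL j ω ≤ ε →
      (μ[Set.indicator {ω' | 0 < W ω' j} (fun _ => (1 : ℝ)) | looSigma W j]) ω ≤
        Real.exp ε *
          (μ[Set.indicator {ω' | W ω' j < 0} (fun _ => (1 : ℝ)) | looSigma W j]) ω)
    (h : Ω → ℝ) (hGmeas : Measurable[looSigma W j] h)
    (h0 : ∀ ω, 0 ≤ h ω) (h1 : ∀ ω, h ω ≤ 1) :
    ∫ ω, (if KL j ω ≤ ε then h ω else 0) *
        Set.indicator {ω' | 0 < W ω' j} (fun _ => (1 : ℝ)) ω ∂μ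
      ≤ Real.exp ε * ∫ ω, h ω * Set.indicator {ω' | W ω' j < 0} (fun _ => (1 : ℝ)) ω ∂μ := by
  classical
  have hGle : looSigma W j ≤ ‹MeasurableSpace Ω› := looSigma_le hW j
  set X := Set.indicator {ω' | 0 < W ω' j} (fun _ => (1 : ℝ)) with hX
  set Y := Set.indicator {ω' | W ω' j < 0} (fun _ => (1 : ℝ)) with hY
  have hSX : MeasurableSet {ω' | 0 < W ω' j} :=
    measurableSet_lt measurable_const ((measurable_pi_apply j).comp hW)
  have hSY : MeasurableSet {ω' | W ω' j < 0} :=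
    measurableSet_lt ((measurable_pi_apply j).comp hW) measurable_const
  have hXint : Integrable X μ := (integrable_const (1:ℝ)).indicator hSX
  have hYint : Integrable Y μ := (integrable_const (1:ℝ)).indicator hSY
  set h' := fun ω => if KL j ω ≤ ε then h ω else 0 with hh'
  have hKLset : MeasurableSet[looSigma W j] {ω | KL j ω ≤ ε} :=
    measurableSet_le (hKL j) measurable_const
  have hh'G : Measurable[looSigma W j] h' := Measurable.ite hKLset hGmeas measurable_const
  have hh'bd : ∀ ω, ‖h' ω‖ ≤ 1 := by
    intro ω
    rw [hh', Real.norm_eq_abs]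
    dsimp only
    split
    · rw [abs_of_nonneg (h0 ω)]; exact h1 ω
    · simp
  have hhbd : ∀ ω, ‖h ω‖ ≤ 1 := by
    intro ω
    rw [Real.norm_eq_abs, abs_of_nonneg (h0 ω)]; exact h1 ω
  have hpull : μ[h' * X | looSigma W j] =ᵐ[μ] h' * μ[X | looSigma W j] :=
    condExp_stronglyMeasurable_mul_of_bound hGle hh'G.stronglyMeasurable hXint 1
      (Filter.Eventually.of_forall hh'bd)
  have hpullY : μ[h * Y | looSigma W j] =ᵐ[μ] h * μ[Y | looSigma W j] :=
    condExp_stronglyMeasurable_mul_of_bound hGle hGmeas.stronglyMeasurable hYint 1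
      (Filter.Eventually.of_forall hhbd)
  have hint1 : Integrable (h' * μ[X | looSigma W j]) μ :=
    integrable_condExp.bdd_mul ((hh'G.mono hGle le_rfl).aestronglyMeasurable)
      (Filter.Eventually.of_forall hh'bd)
  have hint2 : Integrable (h * μ[Y | looSigma W j]) μ :=
    integrable_condExp.bdd_mul ((hGmeas.mono hGle le_rfl).aestronglyMeasurable)
      (Filter.Eventually.of_forall hhbd)
  have hXnn : 0 ≤ᵐ[μ] μ[X | looSigma W j] :=
    condExp_nonneg (Filter.Eventually.of_forall fun ω => Set.indicator_nonneg
      (fun _ _ => zero_le_one) ω)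
  have hYnn : 0 ≤ᵐ[μ] μ[Y | looSigma W j] :=
    condExp_nonneg (Filter.Eventually.of_forall fun ω => Set.indicator_nonneg
      (fun _ _ => zero_le_one) ω)
  calc ∫ ω, h' ω * X ω ∂μ
      = ∫ ω, (μ[h' * X | looSigma W j]) ω ∂μ := (integral_condExp hGle).symm
    _ = ∫ ω, h' ω * (μ[X | looSigma W j]) ω ∂μ := integral_congr_ae hpull
    _ ≤ ∫ ω, Real.exp ε * (h ω * (μ[Y | looSigma W j]) ω) ∂μ := by
        refine integral_mono_ae hint1 (hint2.const_mul _) ?_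
        filter_upwards [hcondj, hYnn] with ω hc hYn
        rw [hh']
        dsimp only
        split
        · rename_i hKLω
          calc h ω * (μ[X | looSigma W j]) ω ≤ h ω * (Real.exp ε * (μ[Y | looSigma W j]) ω) :=
              mul_le_mul_of_nonneg_left (hc hKLω) (h0 ω)
            _ = Real.exp ε * (h ω * (μ[Y | looSigma W j]) ω) := by ring
        · rw [zero_mul]
          exact mul_nonneg (Real.exp_pos ε).le (mul_nonneg (h0 ω) hYn)
    _ = Real.exp ε * ∫ ω, h ω * (μ[Y | looSigma W j]) ω ∂μ := integral_const_mul _ _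
    _ = Real.exp ε * ∫ ω, h ω * Y ω ∂μ := by
        congr 1
        calc ∫ ω, h ω * (μ[Y | looSigma W j]) ω ∂μ
            = ∫ ω, (μ[h * Y | looSigma W j]) ω ∂μ := (integral_congr_ae hpullY).symm
          _ = ∫ ω, h ω * Y ω ∂μ := integral_condExp hGle

end Star

end RobustKO

open RobustKO

/-- Leave-one-out inequality for robust knockoffs: if for each null `j` the
conditional odds of `W_j > 0` given `|W_j|` and `W_{-j}` are at most `e^ε` on the
event `KL̂_j ≤ ε`, then the knockoff+ selection satisfies
`E[#{j ∈ Ŝ ∩ H₀ : KL̂_j ≤ ε} / max(1, |Ŝ|)] ≤ q e^ε`. -/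
theorem robust_knockoffPlus_fdr_bound {Ω : Type*} [MeasurableSpace Ω]
    (μ : Measure Ω) [IsProbabilityMeasure μ]
    (W : Ω → Fin m → ℝ) (hW : Measurable W) (H0 : Finset (Fin m))
    (KL : Fin m → Ω → ℝ) (hKL : ∀ j, Measurable[looSigma W j] (KL j))
    (ε : ℝ) (hε : 0 ≤ ε)
    (hcond : ∀ j ∈ H0, ∀ᵐ ω ∂μ, KL j ω ≤ ε →
      (μ[Set.indicator {ω' | 0 < W ω' j} (fun _ => (1 : ℝ)) | looSigma W j]) ω ≤
        Real.exp ε *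
          (μ[Set.indicator {ω' | W ω' j < 0} (fun _ => (1 : ℝ)) | looSigma W j]) ω)
    (q : ℝ) (hq0 : 0 < q) (hq1 : q < 1) :
    ∫ ω, (((knockoffPlusSelected q (W ω) ∩ H0).filter
          fun j => KL j ω ≤ ε).card : ℝ) /
        max 1 ((knockoffPlusSelected q (W ω)).card : ℝ) ∂μ ≤ q * Real.exp ε := by
  classical
  have hGle : ∀ j, looSigma W j ≤ ‹MeasurableSpace Ω› := looSigma_le hW
  have hlooG : ∀ j, Measurable[looSigma W j] fun ω => looH q j (W ω) := meas_looH_loo hW q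
  have hloo : ∀ j, Measurable fun ω => looH q j (W ω) := fun j =>
    (hlooG j).mono (hGle j) le_rfl
  have hKLm : ∀ j, Measurable (KL j) := fun j => (hKL j).mono (hGle j) le_rfl
  have hWj : ∀ j, Measurable fun ω => W ω j := fun j => (measurable_pi_apply j).comp hW
  set F : Fin m → Ω → ℝ := fun j ω =>
    if 0 < W ω j ∧ KL j ω ≤ ε then looH q j (W ω) else 0 with hF
  have hFmeas : ∀ j, Measurable (F j) := by
    intro j
    refine Measurable.ite ?_ (hloo j) measurable_const
    exact ((measurableSet_lt measurable_const (hWj j)).inter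
      (measurableSet_le (hKLm j) measurable_const))
  have hFnonneg : ∀ j ω, 0 ≤ F j ω := by
    intro j ω
    rw [hF]
    dsimp only
    split
    · exact looH_nonneg _ _ _
    · exact le_rfl
  have hFbd : ∀ j ω, F j ω ≤ 1 := by
    intro j ω
    rw [hF]
    dsimp only
    split
    · exact looH_le_one _ _ _
    · exact zero_le_one
  have hFint : ∀ j, Integrable (F j) μ := by
    intro j
    refine Integrable.mono' (integrable_const (1:ℝ)) (hFmeas j).aestronglyMeasurable ?_
    refine Filter.Eventually.of_forall fun ω => ?_
    rw [Real.norm_eq_abs, abs_of_nonneg (hFnonneg j ω)]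
    exact hFbd j ω
  set Y : Fin m → Ω → ℝ := fun j =>
    Set.indicator {ω' | W ω' j < 0} (fun _ => (1 : ℝ)) with hYdef
  have hYmeas : ∀ j, Measurable (Y j) := fun j =>
    measurable_const.indicator (measurableSet_lt (hWj j) measurable_const)
  have hLYint : ∀ j, Integrable (fun ω => looH q j (W ω) * Y j ω) μ := by
    intro j
    refine Integrable.mono' (integrable_const (1:ℝ))
      ((hloo j).mul (hYmeas j)).aestronglyMeasurable ?_
    refine Filter.Eventually.of_forall fun ω => ?_
    rw [Real.norm_eq_abs]
    have h1 : 0 ≤ Y j ω := Set.indicator_nonneg (fun _ _ => zero_le_one) ω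
    have h2 : Y j ω ≤ 1 := by
      rw [hYdef]
      dsimp only
      rw [Set.indicator_apply]
      split
      · exact le_rfl
      · exact zero_le_one
    rw [abs_of_nonneg (mul_nonneg (looH_nonneg _ _ _) h1)]
    calc looH q j (W ω) * Y j ω ≤ 1 * 1 :=
        mul_le_mul (looH_le_one _ _ _) h2 h1 zero_le_one
      _ = 1 := by norm_num
  -- Step A : pathwise bound and integration
  have stepA : ∫ ω, (((knockoffPlusSelected q (W ω) ∩ H0).filter
          fun j => KL j ω ≤ ε).card : ℝ) /
        max 1 ((knockoffPlusSelected q (W ω)).card : ℝ) ∂μ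
      ≤ ∫ ω, q * ∑ j ∈ H0, F j ω ∂μ := by
    refine integral_mono_of_nonneg ?_ ?_ ?_
    · refine Filter.Eventually.of_forall fun ω => ?_
      have : (0:ℝ) < max 1 ((knockoffPlusSelected q (W ω)).card : ℝ) :=
        lt_of_lt_of_le zero_lt_one (le_max_left _ _)
      positivity
    · exact (integrable_finset_sum H0 fun j _ => hFint j).const_mul q
    · refine Filter.Eventually.of_forall fun ω => ?_
      exact fdp_le q hq0.le (W ω) H0 (fun j => KL j ω ≤ ε)
  -- Step B : linearity
  have stepB : ∫ ω, q * ∑ j ∈ H0, F j ω ∂μ = q * ∑ j ∈ H0, ∫ ω, F j ω ∂μ := by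
    rw [integral_const_mul]
    congr 1
    exact integral_finset_sum H0 fun j _ => hFint j
  -- Step C : per-coordinate star bound
  have stepC : ∀ j ∈ H0, ∫ ω, F j ω ∂μ
      ≤ Real.exp ε * ∫ ω, looH q j (W ω) * Y j ω ∂μ := by
    intro j hj
    have hFeq : F j = fun ω => (if KL j ω ≤ ε then looH q j (W ω) else 0) *
        Set.indicator {ω' | 0 < W ω' j} (fun _ => (1 : ℝ)) ω := by
      funext ω
      rw [hF, Set.indicator_apply]
      dsimp only
      by_cases h1 : 0 < W ω j <;> by_cases h2 : KL j ω ≤ ε <;>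
        simp [h1, h2, Set.mem_setOf_eq]
    rw [hFeq]
    exact star_bound μ W hW KL hKL ε j (hcond j hj) _ (hlooG j)
      (fun ω => looH_nonneg _ _ _) (fun ω => looH_le_one _ _ _)
  -- Step D : the leave-one-out sum integrates to at most one
  have stepD : ∑ j ∈ H0, ∫ ω, looH q j (W ω) * Y j ω ∂μ ≤ 1 := by
    rw [← integral_finset_sum H0 fun j _ => hLYint j]
    calc ∫ ω, ∑ j ∈ H0, looH q j (W ω) * Y j ω ∂μ
        ≤ ∫ ω, (1:ℝ) ∂μ := by
          refine integral_mono (integrable_finset_sum H0 fun j _ => hLYint j)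
            (integrable_const 1) ?_
          intro ω
          have hterm : ∀ j, looH q j (W ω) * Y j ω
              = if W ω j < 0 then looH q j (W ω) else 0 := by
            intro j
            rw [hYdef]
            dsimp only
            rw [Set.indicator_apply]
            by_cases h : W ω j < 0 <;> simp [h, Set.mem_setOf_eq]
          calc ∑ j ∈ H0, looH q j (W ω) * Y j ω
              = ∑ j ∈ H0, (if W ω j < 0 then looH q j (W ω) else 0) :=
                Finset.sum_congr rfl fun j _ => hterm j
            _ ≤ ∑ j, (if W ω j < 0 then looH q j (W ω) else 0) := by
                refine Finset.sum_le_sum_of_subset_of_nonneg (Finset.subset_univ H0) ?_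
                intro j _ _
                split
                · exact looH_nonneg _ _ _
                · exact le_rfl
            _ ≤ 1 := claim_sum q (W ω)
      _ = 1 := by simp
  -- Combine
  calc ∫ ω, (((knockoffPlusSelected q (W ω) ∩ H0).filter
          fun j => KL j ω ≤ ε).card : ℝ) /
        max 1 ((knockoffPlusSelected q (W ω)).card : ℝ) ∂μ
      ≤ q * ∑ j ∈ H0, ∫ ω, F j ω ∂μ := stepA.trans_eq stepB
    _ ≤ q * ∑ j ∈ H0, Real.exp ε * ∫ ω, looH q j (W ω) * Y j ω ∂μ := by
        refine mul_le_mul_of_nonneg_left (Finset.sum_le_sum stepC) hq0.le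
    _ = q * (Real.exp ε * ∑ j ∈ H0, ∫ ω, looH q j (W ω) * Y j ω ∂μ) := by
        simp only [Finset.mul_sum]
    _ ≤ q * (Real.exp ε * 1) := by
        refine mul_le_mul_of_nonneg_left ?_ hq0.le
        exact mul_le_mul_of_nonneg_left stepD (Real.exp_pos ε).le
    _ = q * Real.exp ε := by ring
end

section
/- Swap-invariance of the W-statistic construction: Let W_j = |γ_j(λ)| − |γ̃_j(λ)| where (β(λ), γ(λ), γ̃(λ)) minimizes L(X̃β + Aγ + Ãγ̃, y) + ν^{-1}(‖Dβ − γ‖₂² + ‖Dβ − γ̃‖₂²) + λ(‖γ‖₁ + ‖γ̃‖₁) with strictly convex L ensuring a unique minimizer. Then swapping columns j ∈ S of A and Ã in the data swaps the roles of γ_j and γ̃_j in the unique minimizer, hence W_j computed on the swapped data equals −W_j for j ∈ S and +W_j for j ∉ S (the flip-sign property). -/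
open Matrix

/-- The Split Knockoff objective
`L(X̃β + Aγ + Ãγ̃, y) + ν⁻¹(‖Dβ − γ‖₂² + ‖Dβ − γ̃‖₂²) + λ(‖γ‖₁ + ‖γ̃‖₁)`. -/
noncomputable def splitObj {n p m : ℕ}
    (L : (Fin n → ℝ) → (Fin n → ℝ) → ℝ) (y : Fin n → ℝ)
    (Xt : Matrix (Fin n) (Fin p) ℝ) (D : Matrix (Fin m) (Fin p) ℝ)
    (lam nu : ℝ) (A At : Matrix (Fin n) (Fin m) ℝ)
    (z : (Fin p → ℝ) × (Fin m → ℝ) × (Fin m → ℝ)) : ℝ :=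
  L (Xt.mulVec z.1 + A.mulVec z.2.1 + At.mulVec z.2.2) y +
    nu⁻¹ * ((∑ j, (D.mulVec z.1 j - z.2.1 j) ^ 2) +
      ∑ j, (D.mulVec z.1 j - z.2.2 j) ^ 2) +
    lam * ((∑ j, |z.2.1 j|) + ∑ j, |z.2.2 j|)

/-- Swap the `γ` and `γ̃` coordinates for indices in `S`. -/
def swapz {p m : ℕ} (S : Finset (Fin m))
    (z : (Fin p → ℝ) × (Fin m → ℝ) × (Fin m → ℝ)) :
    (Fin p → ℝ) × (Fin m → ℝ) × (Fin m → ℝ) :=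
  (z.1, fun j => if j ∈ S then z.2.2 j else z.2.1 j,
        fun j => if j ∈ S then z.2.1 j else z.2.2 j)

lemma swapz_invol {p m : ℕ} (S : Finset (Fin m))
    (z : (Fin p → ℝ) × (Fin m → ℝ) × (Fin m → ℝ)) : swapz S (swapz S z) = z := by
  unfold swapz
  refine Prod.ext rfl (Prod.ext ?_ ?_) <;> funext j <;> by_cases h : j ∈ S <;> simp [h]

lemma swap_obj {n p m : ℕ}
    (L : (Fin n → ℝ) → (Fin n → ℝ) → ℝ) (y : Fin n → ℝ)
    (Xt : Matrix (Fin n) (Fin p) ℝ) (D : Matrix (Fin m) (Fin p) ℝ)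
    (lam nu : ℝ) (A At : Matrix (Fin n) (Fin m) ℝ) (S : Finset (Fin m))
    (z : (Fin p → ℝ) × (Fin m → ℝ) × (Fin m → ℝ)) :
    splitObj L y Xt D lam nu
      (Matrix.of fun i j => if j ∈ S then At i j else A i j)
      (Matrix.of fun i j => if j ∈ S then A i j else At i j) (swapz S z)
    = splitObj L y Xt D lam nu A At z := by
  unfold splitObj swapz
  have hL : (Matrix.of fun i j => if j ∈ S then At i j else A i j).mulVec
        (fun j => if j ∈ S then z.2.2 j else z.2.1 j) +
      (Matrix.of fun i j => if j ∈ S then A i j else At i j).mulVec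
        (fun j => if j ∈ S then z.2.1 j else z.2.2 j)
      = A.mulVec z.2.1 + At.mulVec z.2.2 := by
    funext i
    simp only [Pi.add_apply, mulVec, dotProduct, Matrix.of_apply]
    rw [← Finset.sum_add_distrib, ← Finset.sum_add_distrib]
    refine Finset.sum_congr rfl fun j _ => ?_
    by_cases h : j ∈ S <;> simp [h] <;> ring
  have hP : ((∑ j, (D.mulVec z.1 j - if j ∈ S then z.2.2 j else z.2.1 j) ^ 2) +
        ∑ j, (D.mulVec z.1 j - if j ∈ S then z.2.1 j else z.2.2 j) ^ 2)
      = (∑ j, (D.mulVec z.1 j - z.2.1 j) ^ 2) + ∑ j, (D.mulVec z.1 j - z.2.2 j) ^ 2 := by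
    rw [← Finset.sum_add_distrib, ← Finset.sum_add_distrib]
    refine Finset.sum_congr rfl fun j _ => ?_
    by_cases h : j ∈ S <;> simp [h] <;> ring
  have hA : ((∑ j, |if j ∈ S then z.2.2 j else z.2.1 j|) +
        ∑ j, |if j ∈ S then z.2.1 j else z.2.2 j|)
      = (∑ j, |z.2.1 j|) + ∑ j, |z.2.2 j| := by
    rw [← Finset.sum_add_distrib, ← Finset.sum_add_distrib]
    refine Finset.sum_congr rfl fun j _ => ?_
    by_cases h : j ∈ S <;> simp [h] <;> ring
  simp only [add_assoc] at hL ⊢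
  rw [hL, hP, hA]

/-- Flip-sign property of the Split Knockoff `W`-statistics: if `z₀` is the unique
minimizer of the objective for data `(A, Ã)` and `z₁` the unique minimizer for the
data with columns `j ∈ S` of `A` and `Ã` exchanged, then
`W_j = |γ_j| − |γ̃_j|` flips sign for `j ∈ S` and is unchanged for `j ∉ S`. -/
theorem splitKnockoff_flip_sign {n p m : ℕ}
    (L : (Fin n → ℝ) → (Fin n → ℝ) → ℝ) (y : Fin n → ℝ)
    (Xt : Matrix (Fin n) (Fin p) ℝ) (D : Matrix (Fin m) (Fin p) ℝ)
    (lam nu : ℝ) (hlam : 0 < lam) (hnu : 0 < nu)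
    (A At : Matrix (Fin n) (Fin m) ℝ) (S : Finset (Fin m))
    (z₀ z₁ : (Fin p → ℝ) × (Fin m → ℝ) × (Fin m → ℝ))
    (hz₀ : ∀ z ≠ z₀, splitObj L y Xt D lam nu A At z₀ < splitObj L y Xt D lam nu A At z)
    (hz₁ : ∀ z ≠ z₁,
      splitObj L y Xt D lam nu
          (Matrix.of fun i j => if j ∈ S then At i j else A i j)
          (Matrix.of fun i j => if j ∈ S then A i j else At i j) z₁ <
        splitObj L y Xt D lam nu
          (Matrix.of fun i j => if j ∈ S then At i j else A i j)
          (Matrix.of fun i j => if j ∈ S then A i j else At i j) z) :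
    ∀ j : Fin m,
      (j ∈ S → |z₁.2.1 j| - |z₁.2.2 j| = -(|z₀.2.1 j| - |z₀.2.2 j|)) ∧
      (j ∉ S → |z₁.2.1 j| - |z₁.2.2 j| = |z₀.2.1 j| - |z₀.2.2 j|) := by
  have key : z₁ = swapz S z₀ := by
    by_contra hne
    have h1 := hz₁ (swapz S z₀) (Ne.symm hne)
    have h2 : swapz S z₁ ≠ z₀ := by
      intro h
      exact hne (by rw [← h, swapz_invol])
    have h3 := hz₀ (swapz S z₁) h2
    rw [swap_obj L y Xt D lam nu A At S z₀] at h1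
    have h4 : splitObj L y Xt D lam nu A At (swapz S z₁)
        = splitObj L y Xt D lam nu
          (Matrix.of fun i j => if j ∈ S then At i j else A i j)
          (Matrix.of fun i j => if j ∈ S then A i j else At i j) z₁ := by
      conv_rhs => rw [← swapz_invol S z₁]
      rw [swap_obj]
    rw [h4] at h3
    linarith
  intro j
  subst key
  constructor <;> intro hj <;> simp [swapz, hj] <;> ring
end
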